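/- arXiv:1710.06302 — 5 statements merged into one kernel-verified Lean document; each statement's English description precedes it below -/
import Mathlib

section
/- Under the closed-loop dynamics induced by the longest-time-to-go-first policy, the ordering of device states is preserved: if x_i(0) ≥ x_j(0) then x_i(t) ≥ x_j(t) for all t ≥ 0. -/
open Set

/-- A power reference signal `Pr` is feasible for devices with maximum powers `pbar`
and initial times-to-go `x`. -/
def Feasible (n : ℕ) (pbar x : Fin n → ℝ) (Pr : ℝ → ℝ) : Prop :=
  ∃ u z : ℝ → Fin n → ℝ,
    (∀ i, z 0 i = x i) ∧
    (∀ t, 0 ≤ t → ∀ i, u t i ∈ Set.Icc 0 (pbar i)) ∧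
    (∀ t, 0 ≤ t → ∑ i, u t i = Pr t) ∧
    (∀ t, 0 ≤ t → ∀ i, HasDerivAt (fun s => z s i) (-(u t i) / pbar i) t) ∧
    (∀ t, 0 ≤ t → ∀ i, 0 ≤ z t i)

/-- Truncation of a reference signal to `[0, t)`. -/
noncomputable def trunc (Pr : ℝ → ℝ) (t : ℝ) : ℝ → ℝ :=
  fun τ => if τ ∈ Set.Ico 0 t then Pr τ else 0

/-- Time to failure: supremum of times `t` such that the truncated reference is feasible. -/
noncomputable def timeToFailure (n : ℕ) (pbar x : Fin n → ℝ) (Pr : ℝ → ℝ) : ENNReal :=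
  ⨆ t ∈ {t : ℝ | 0 ≤ t ∧ Feasible n pbar x (trunc Pr t)}, ENNReal.ofReal t

/-- Maximum instantaneous power available in state `x`. -/
noncomputable def availPower (n : ℕ) (pbar x : Fin n → ℝ) : ℝ :=
  ∑ i ∈ Finset.univ.filter (fun i => 0 < x i), pbar i

/-- The longest-time-to-go-first (waterfall) policy: device `i` (if nonempty) runs at
the common fraction of maximum power of its equal-time-to-go group, where the group's
fraction saturates the request left over by all strictly higher groups. -/
noncomputable def kappa (n : ℕ) (pbar x : Fin n → ℝ) (Pr : ℝ) : Fin n → ℝ :=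
  fun i =>
    if 0 < x i then
      pbar i * max 0 (min 1
        ((Pr - ∑ j ∈ Finset.univ.filter (fun j => x i < x j), pbar j) /
          (∑ j ∈ Finset.univ.filter (fun j => x j = x i), pbar j)))
    else 0

/-- Closed-loop dynamics under the policy `kappa`. -/
def ClosedLoop (n : ℕ) (pbar : Fin n → ℝ) (Pr : ℝ → ℝ) (z : ℝ → Fin n → ℝ) : Prop :=
  ∀ t, 0 ≤ t → ∀ i,
    HasDerivAt (fun s => z s i) (-(kappa n pbar (z t) (Pr t) i) / pbar i) t

/-- A state trajectory fulfils a reference signal (for all `t ≥ 0`). -/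
def Fulfils (n : ℕ) (pbar : Fin n → ℝ) (Pr : ℝ → ℝ) (z : ℝ → Fin n → ℝ) : Prop :=
  ∃ u : ℝ → Fin n → ℝ,
    (∀ t, 0 ≤ t → ∀ i, u t i ∈ Set.Icc 0 (pbar i)) ∧
    (∀ t, 0 ≤ t → ∑ i, u t i = Pr t) ∧
    (∀ t, 0 ≤ t → ∀ i, HasDerivAt (fun s => z s i) (-(u t i) / pbar i) t) ∧
    (∀ t, 0 ≤ t → ∀ i, 0 ≤ z t i)

/-- A state trajectory fulfils a reference signal on `[0, T]`. -/
def FulfilsOn (n : ℕ) (pbar : Fin n → ℝ) (Pr : ℝ → ℝ) (z : ℝ → Fin n → ℝ) (T : ℝ) : Prop :=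
  ∃ u : ℝ → Fin n → ℝ,
    (∀ s ∈ Set.Icc 0 T, ∀ i, u s i ∈ Set.Icc 0 (pbar i)) ∧
    (∀ s ∈ Set.Icc 0 T, ∑ i, u s i = Pr s) ∧
    (∀ s ∈ Set.Icc 0 T, ∀ i, HasDerivAt (fun r => z r i) (-(u s i) / pbar i) s) ∧
    (∀ s ∈ Set.Icc 0 T, ∀ i, 0 ≤ z s i)

/-- Closed-loop dynamics under the policy `kappa`, on `[0, T]`. -/
def ClosedLoopOn (n : ℕ) (pbar : Fin n → ℝ) (Pr : ℝ → ℝ) (z : ℝ → Fin n → ℝ) (T : ℝ) : Prop :=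
  ∀ s ∈ Set.Icc 0 T, ∀ i,
    HasDerivAt (fun r => z r i) (-(kappa n pbar (z s) (Pr s) i) / pbar i) s

/-!
Write `r_k = κ_k / p̄_k` for the fraction of maximum power at which device `k` runs. The waterfall
rule only serves a group once every strictly higher group is saturated, so `x_i < x_j` forces
`r_i ≤ r_j`: device `j` drains at least as fast as device `i`. Hence `z_j - z_i` is nonincreasing
wherever `z_j > z_i`, and a fencing argument shows that `z_j` can never cross above `z_i`.
-/

/-- Fence `f` by `g + ε (x - a + 1)`: this barrier lies strictly above `g`, so `bound` is only
needed where `g < f`. -/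
theorem image_le_of_deriv_right_le_deriv_of_lt {f f' g g' : ℝ → ℝ} {a b : ℝ}
    (hf : ContinuousOn f (Icc a b)) (hf' : ∀ x ∈ Ico a b, HasDerivWithinAt f (f' x) (Ici x) x)
    (hg : ContinuousOn g (Icc a b)) (hg' : ∀ x ∈ Ico a b, HasDerivWithinAt g (g' x) (Ici x) x)
    (ha : f a ≤ g a) (bound : ∀ x ∈ Ico a b, g x < f x → f' x ≤ g' x) :
    ∀ ⦃x⦄, x ∈ Icc a b → f x ≤ g x := by
  intro x hx
  have hpos : 0 < x - a + 1 := by linarith [hx.1]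
  refine le_of_forall_pos_le_add fun ε hε => ?_
  have hδ : 0 < ε / (x - a + 1) := div_pos hε hpos
  have hfence := image_le_of_deriv_right_lt_deriv_boundary' hf hf'
    (B := fun y => g y + ε / (x - a + 1) * (y - a + 1)) (B' := fun y => g' y + ε / (x - a + 1))
    (by simpa using ha.trans (le_add_of_nonneg_right hδ.le))
    (hg.add (continuousOn_const.mul ((continuousOn_id.sub continuousOn_const).add
      continuousOn_const)))
    (fun y hy => ((hg' y hy).add ((((hasDerivAt_id' y).sub_const a).add_const 1).const_mul
      (ε / (x - a + 1))).hasDerivWithinAt).congr_deriv (by ring))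
    (fun y hy hfy => by
      have hgf : g y < f y := by rw [hfy]; nlinarith [hy.1]
      linarith [bound y hy hgf])
    hx
  rwa [div_mul_cancel₀ _ hpos.ne'] at hfence

section Waterfall

variable {ι : Type*} [Fintype ι]

theorem sum_filter_lt_add_sum_filter_eq_le [DecidableEq ι] (w x : ι → ℝ) (hw : ∀ k, 0 ≤ w k)
    {a b : ℝ} (hab : a < b) :
    ∑ k with b < x k, w k + ∑ k with x k = b, w k ≤ ∑ k with a < x k, w k := by
  rw [← Finset.sum_union (Finset.disjoint_filter.2 fun k _ hk heq => hk.ne' heq)]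
  refine Finset.sum_le_sum_of_subset_of_nonneg (fun k hk => ?_) fun k _ _ => hw k
  simp only [Finset.mem_union, Finset.mem_filter, Finset.mem_univ, true_and] at hk ⊢
  rcases hk with hk | rfl
  exacts [hab.trans hk, hab]

theorem sum_filter_eq_self_pos (w x : ι → ℝ) (hw : ∀ k, 0 < w k) (i : ι) :
    0 < ∑ k with x k = x i, w k :=
  Finset.sum_pos (fun k _ => hw k) ⟨i, by simp⟩

end Waterfall

variable {n : ℕ} {pbar : Fin n → ℝ}

theorem kappa_nonneg (hp : ∀ i, 0 < pbar i) (x : Fin n → ℝ) (Pr : ℝ) (i : Fin n) :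
    0 ≤ kappa n pbar x Pr i := by
  unfold kappa
  split_ifs
  exacts [mul_nonneg (hp i).le (le_max_left _ _), le_rfl]

theorem kappa_div_of_pos (hp : ∀ i, 0 < pbar i) (x : Fin n → ℝ) (Pr : ℝ) {i : Fin n}
    (hi : 0 < x i) :
    kappa n pbar x Pr i / pbar i = max 0 (min 1
      ((Pr - ∑ j with x i < x j, pbar j) / ∑ j with x j = x i, pbar j)) := by
  rw [kappa, if_pos hi, mul_div_cancel_left₀ _ (hp i).ne']

/-- If `j`'s group is unsaturated, the request is used up before reaching `i`'s lower group. -/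
theorem kappa_div_le_kappa_div_of_lt (hp : ∀ i, 0 < pbar i) (x : Fin n → ℝ) (Pr : ℝ)
    {i j : Fin n} (hij : x i < x j) :
    kappa n pbar x Pr i / pbar i ≤ kappa n pbar x Pr j / pbar j := by
  by_cases hi : 0 < x i
  swap
  · rw [kappa, if_neg hi, zero_div]
    exact div_nonneg (kappa_nonneg hp x Pr j) (hp j).le
  rw [kappa_div_of_pos hp x Pr hi, kappa_div_of_pos hp x Pr (hi.trans hij)]
  have hBj := sum_filter_eq_self_pos pbar x hp j
  rcases le_or_gt 1 ((Pr - ∑ k with x j < x k, pbar k) / ∑ k with x k = x j, pbar k) with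
    hsat | hunsat
  · rw [min_eq_left hsat, max_eq_right zero_le_one]
    exact max_le zero_le_one (min_le_left _ _)
  · have hPr := (div_lt_one hBj).1 hunsat
    have hle := sum_filter_lt_add_sum_filter_eq_le pbar x (fun k => (hp k).le) hij
    have hqi : (Pr - ∑ k with x i < x k, pbar k) / ∑ k with x k = x i, pbar k ≤ 0 :=
      div_nonpos_of_nonpos_of_nonneg (by linarith) (sum_filter_eq_self_pos pbar x hp i).le
    rw [min_eq_right (hqi.trans zero_le_one), max_eq_left hqi]
    exact le_max_left _ _

theorem closedLoop_order_preserved_general (n : ℕ) (pbar : Fin n → ℝ) (Pr : ℝ → ℝ)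
    (z : ℝ → Fin n → ℝ) (hp : ∀ i, 0 < pbar i)
    (hcl : ClosedLoop n pbar Pr z)
    (i j : Fin n) (hij : z 0 j ≤ z 0 i) :
    ∀ t, 0 ≤ t → z t j ≤ z t i := by
  intro t ht
  have hcont : ∀ k, ContinuousOn (fun s => z s k) (Icc 0 t) := fun k s hs =>
    (hcl s hs.1 k).continuousAt.continuousWithinAt
  have hderiv : ∀ k, ∀ s ∈ Ico (0 : ℝ) t, HasDerivWithinAt (fun s => z s k)
      (-kappa n pbar (z s) (Pr s) k / pbar k) (Ici s) s := fun k s hs =>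
    (hcl s hs.1 k).hasDerivWithinAt
  refine image_le_of_deriv_right_le_deriv_of_lt (hcont j) (hderiv j) (hcont i) (hderiv i) hij
    (fun s _ hs => ?_) ⟨ht, le_rfl⟩
  rw [neg_div, neg_div, neg_le_neg_iff]
  exact kappa_div_le_kappa_div_of_lt hp (z s) (Pr s) hs

/-- the closed-loop dynamics preserve the ordering of device states. -/
theorem closedLoop_order_preserved (n : ℕ) (pbar : Fin n → ℝ) (Pr : ℝ → ℝ)
    (z : ℝ → Fin n → ℝ) (hp : ∀ i, 0 < pbar i)
    (hz : ∀ t, 0 ≤ t → ∀ i, 0 ≤ z t i)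
    (hcl : ClosedLoop n pbar Pr z)
    (i j : Fin n) (hij : z 0 j ≤ z 0 i) :
    ∀ t, 0 ≤ t → z t j ≤ z t i :=
  closedLoop_order_preserved_general n pbar Pr z hp hcl i j hij
end

section
/- Under the closed-loop dynamics induced by the longest-time-to-go-first policy, devices with equal initial times-to-go remain equal forever: x_i(0) = x_j(0) implies x_i(t) = x_j(t) for all t ≥ 0. -/
open Set

/-! Under the waterfall policy the normalized discharge rate `κᵢ / p̄ᵢ` is a nondecreasing
function of the time-to-go `xᵢ`: if `xⱼ < xᵢ` and the group of `i` is not saturated, nothing is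
left for the lower group of `j`. Hence `(xᵢ - xⱼ)(ẋᵢ - ẋⱼ) ≤ 0`, so `(xᵢ - xⱼ)²` is
nonincreasing along the closed loop and stays at its initial value `0`. -/

section Waterfall

open Finset

variable {n : ℕ} (pbar x : Fin n → ℝ)

noncomputable def powerAbove (i : Fin n) : ℝ := ∑ j ∈ univ.filter (fun j => x i < x j), pbar j

noncomputable def groupPower (i : Fin n) : ℝ := ∑ j ∈ univ.filter (fun j => x j = x i), pbar j

variable {pbar x}

lemma groupPower_pos (hp : ∀ i, 0 < pbar i) (i : Fin n) : 0 < groupPower pbar x i :=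
  (hp i).trans_le <| single_le_sum (fun k _ => (hp k).le) (by simp)

lemma powerAbove_add_groupPower_le (hp : ∀ i, 0 ≤ pbar i) {i j : Fin n} (hji : x j < x i) :
    powerAbove pbar x i + groupPower pbar x i ≤ powerAbove pbar x j := by
  have hdisj : Disjoint (univ.filter (fun k => x i < x k)) (univ.filter (fun k => x k = x i)) :=
    disjoint_filter.2 fun k _ hlt heq => hlt.ne' heq
  rw [powerAbove, groupPower, powerAbove, ← sum_union hdisj]
  refine sum_le_sum_of_subset_of_nonneg ?_ (fun k _ _ => hp k)
  intro k
  simp only [Finset.mem_union, Finset.mem_filter, Finset.mem_univ, true_and]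
  rintro (hlt | heq)
  · exact hji.trans hlt
  · exact heq ▸ hji

lemma kappa_div_pbar {i : Fin n} (hpi : pbar i ≠ 0) (P : ℝ) :
    kappa n pbar x P i / pbar i =
      if 0 < x i then max 0 (min 1 ((P - powerAbove pbar x i) / groupPower pbar x i))
      else 0 := by
  unfold kappa
  split_ifs
  · exact mul_div_cancel_left₀ _ hpi
  · exact zero_div _

lemma kappa_div_pbar_le_of_le (hp : ∀ i, 0 < pbar i) (P : ℝ) {i j : Fin n} (hji : x j ≤ x i) :
    kappa n pbar x P j / pbar j ≤ kappa n pbar x P i / pbar i := by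
  rw [kappa_div_pbar (hp i).ne', kappa_div_pbar (hp j).ne']
  by_cases hj : 0 < x j
  swap
  · rw [if_neg hj]
    split_ifs <;> simp
  rw [if_pos hj, if_pos (hj.trans_le hji)]
  rcases hji.eq_or_lt with heq | hlt
  · simp only [powerAbove, groupPower, heq, le_refl]
  by_cases hfull : 1 ≤ (P - powerAbove pbar x i) / groupPower pbar x i
  · rw [min_eq_left hfull, max_eq_right zero_le_one]
    exact max_le zero_le_one (min_le_left _ _)
  have hshort : P < powerAbove pbar x i + groupPower pbar x i := by
    have := (div_lt_one (groupPower_pos hp i)).1 (not_le.1 hfull)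
    linarith
  have hneg : (P - powerAbove pbar x j) / groupPower pbar x j < 0 :=
    div_neg_of_neg_of_pos
      (by linarith [powerAbove_add_groupPower_le (fun k => (hp k).le) hlt])
      (groupPower_pos hp j)
  rw [max_eq_left ((min_le_right _ _).trans hneg.le)]
  exact le_max_left _ _

lemma sub_mul_kappa_div_pbar_sub_nonneg (hp : ∀ i, 0 < pbar i) (P : ℝ) (i j : Fin n) :
    0 ≤ (x i - x j) * (kappa n pbar x P i / pbar i - kappa n pbar x P j / pbar j) := by
  rcases le_total (x j) (x i) with hji | hij
  · exact mul_nonneg (sub_nonneg.2 hji) (sub_nonneg.2 (kappa_div_pbar_le_of_le hp P hji))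
  · exact mul_nonneg_of_nonpos_of_nonpos (sub_nonpos.2 hij)
      (sub_nonpos.2 (kappa_div_pbar_le_of_le hp P hij))

end Waterfall

theorem eq_of_hasDerivAt_of_sub_mul_sub_nonpos {f g f' g' : ℝ → ℝ} {a : ℝ}
    (hf : ∀ t, a ≤ t → HasDerivAt f (f' t) t) (hg : ∀ t, a ≤ t → HasDerivAt g (g' t) t)
    (hdiss : ∀ t, a ≤ t → (f t - g t) * (f' t - g' t) ≤ 0) (ha : f a = g a) :
    ∀ t, a ≤ t → f t = g t := by
  set q : ℝ → ℝ := fun s => (f s - g s) ^ 2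
  have hq : ∀ t, a ≤ t → HasDerivAt q (2 * ((f t - g t) * (f' t - g' t))) t := fun t ht => by
    refine (((hf t ht).fun_sub (hg t ht)).fun_pow 2).congr_deriv ?_
    norm_num
    ring
  have hanti : AntitoneOn q (Ici a) := by
    refine antitoneOn_of_deriv_nonpos (convex_Ici a)
      (fun t ht => (hq t ht).continuousAt.continuousWithinAt) (fun t ht => ?_) (fun t ht => ?_)
    all_goals rw [interior_Ici] at ht
    · exact (hq t ht.le).differentiableAt.differentiableWithinAt
    · rw [(hq t ht.le).deriv]
      linarith [hdiss t ht.le]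
  intro t ht
  have hqt : q t ≤ 0 := by
    simpa [q, ha] using hanti self_mem_Ici ht ht
  exact sub_eq_zero.1 (pow_eq_zero_iff two_ne_zero |>.1 (le_antisymm hqt (sq_nonneg _)))

theorem closedLoop_equal_stay_equal_general (n : ℕ) (pbar : Fin n → ℝ) (Pr : ℝ → ℝ)
    (z : ℝ → Fin n → ℝ) (hp : ∀ i, 0 < pbar i)
    (hcl : ClosedLoop n pbar Pr z)
    (i j : Fin n) (hij : z 0 i = z 0 j) :
    ∀ t, 0 ≤ t → z t i = z t j := by
  refine eq_of_hasDerivAt_of_sub_mul_sub_nonpos (hcl · · i) (hcl · · j) (fun t _ => ?_) hij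
  have := sub_mul_kappa_div_pbar_sub_nonneg hp (Pr t) i j (x := z t)
  rw [neg_div, neg_div, neg_sub_neg]
  linarith

/-- devices with equal initial times-to-go remain equal forever under the
closed-loop dynamics. -/
theorem closedLoop_equal_stay_equal (n : ℕ) (pbar : Fin n → ℝ) (Pr : ℝ → ℝ)
    (z : ℝ → Fin n → ℝ) (hp : ∀ i, 0 < pbar i)
    (hz : ∀ t, 0 ≤ t → ∀ i, 0 ≤ z t i)
    (hcl : ClosedLoop n pbar Pr z)
    (i j : Fin n) (hij : z 0 i = z 0 j) :
    ∀ t, 0 ≤ t → z t i = z t j :=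
  closedLoop_equal_stay_equal_general n pbar Pr z hp hcl i j hij
end

section
/- Along any trajectory of the closed-loop system under the longest-time-to-go-first policy, the number of distinct values among the device states x_1(t),...,x_n(t) is non-increasing in t; consequently at most n transitions between the partition-induced regions of the state space occur along any trajectory. -/
open Set

/-! Under `kappa` the fraction `κᵢ / p̄ᵢ` of maximum power at which device `i` runs depends
on `xᵢ` alone and is nondecreasing in it: a group of equal states only gets power once every
strictly higher group runs at full power. Hence `(zᵢ - zⱼ)²` is nonincreasing along a closed-loop
trajectory, so states that coincide stay equal, the values at time `t` are the image of the
values at time `s ≤ t`, and their number can only drop. It always lies in `[1, n]`. -/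

lemma Finset.sum_filter_lt_add_sum_filter_eq_le_sum_filter_lt {ι α : Type*} [Fintype ι]
    [LinearOrder α] {w : ι → ℝ} (hw : ∀ k, 0 ≤ w k) (x : ι → α) {u v : α} (huv : u < v) :
    ∑ k ∈ Finset.univ.filter (fun k => v < x k), w k +
      ∑ k ∈ Finset.univ.filter (fun k => x k = v), w k ≤
      ∑ k ∈ Finset.univ.filter (fun k => u < x k), w k := by
  classical
  rw [← Finset.sum_union (Finset.disjoint_filter.mpr fun k _ h => h.ne')]
  refine Finset.sum_le_sum_of_subset_of_nonneg ?_ fun k _ _ => hw k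
  intro k
  simp only [Finset.mem_union, Finset.mem_filter, Finset.mem_univ, true_and]
  rintro (hk | hk)
  exacts [huv.trans hk, hk ▸ huv]

/-- The squared gap `(f - g)²` is antitone on `[s, t]`. -/
lemma eq_of_hasDerivAt_of_sub_mul_sub_nonpos_s6 {f g f' g' : ℝ → ℝ} {s t : ℝ} (hst : s ≤ t)
    (hf : ∀ τ ∈ Icc s t, HasDerivAt f (f' τ) τ) (hg : ∀ τ ∈ Icc s t, HasDerivAt g (g' τ) τ)
    (hfg : ∀ τ ∈ Icc s t, (f τ - g τ) * (f' τ - g' τ) ≤ 0) (hs : f s = g s) :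
    f t = g t := by
  have hderiv : ∀ τ ∈ Icc s t, HasDerivAt (fun τ => (f τ - g τ) * (f τ - g τ))
      ((f' τ - g' τ) * (f τ - g τ) + (f τ - g τ) * (f' τ - g' τ)) τ := fun τ hτ =>
    ((hf τ hτ).sub (hg τ hτ)).mul ((hf τ hτ).sub (hg τ hτ))
  have hanti : AntitoneOn (fun τ => (f τ - g τ) * (f τ - g τ)) (Icc s t) := by
    refine antitoneOn_of_hasDerivWithinAt_nonpos (convex_Icc s t)
      (fun τ hτ => (hderiv τ hτ).continuousAt.continuousWithinAt)
      (fun τ hτ => (hderiv τ (interior_subset hτ)).hasDerivWithinAt) fun τ hτ => ?_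
    linarith [hfg τ (interior_subset hτ)]
  have hsq := hanti (left_mem_Icc.2 hst) (right_mem_Icc.2 hst) hst
  simp only [hs, sub_self, mul_zero] at hsq
  exact sub_eq_zero.1 (mul_self_eq_zero.1 (le_antisymm hsq (mul_self_nonneg _)))

lemma Finset.card_image_le_card_image_of_factorsThrough {α β γ : Type*} [DecidableEq β]
    [DecidableEq γ] {f : α → β} {g : α → γ} (hgf : g.FactorsThrough f) (s : Finset α) :
    (s.image g).card ≤ (s.image f).card := by
  rcases s.eq_empty_or_nonempty with rfl | ⟨a, -⟩
  · simp
  refine Finset.card_le_card_of_surjOn (Function.extend f g fun _ => g a) ?_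
  intro c hc
  obtain ⟨b, hb, rfl⟩ := Finset.mem_image.1 hc
  exact ⟨f b, Finset.mem_image_of_mem f hb, hgf.extend_apply _ b⟩

lemma Finset.card_image_univ_mem_Icc {ι β : Type*} [Fintype ι] [Nonempty ι] [DecidableEq β]
    (f : ι → β) : (Finset.univ.image f).card ∈ Set.Icc 1 (Fintype.card ι) :=
  ⟨Finset.card_pos.2 (Finset.univ_nonempty.image f), Finset.card_image_le⟩

noncomputable def kappaFraction (n : ℕ) (pbar x : Fin n → ℝ) (P v : ℝ) : ℝ :=
  if 0 < v then
    max 0 (min 1 ((P - ∑ j ∈ Finset.univ.filter (fun j => v < x j), pbar j) /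
      (∑ j ∈ Finset.univ.filter (fun j => x j = v), pbar j)))
  else 0

section KappaFraction

variable {n : ℕ} {pbar x : Fin n → ℝ} {P : ℝ}

lemma kappa_apply_eq_mul_kappaFraction (i : Fin n) :
    kappa n pbar x P i = pbar i * kappaFraction n pbar x P (x i) := by
  unfold kappa kappaFraction
  split_ifs <;> simp

lemma kappa_div_eq_kappaFraction {i : Fin n} (hpi : pbar i ≠ 0) :
    kappa n pbar x P i / pbar i = kappaFraction n pbar x P (x i) := by
  rw [kappa_apply_eq_mul_kappaFraction, mul_div_cancel_left₀ _ hpi]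

lemma kappaFraction_nonneg (v : ℝ) : 0 ≤ kappaFraction n pbar x P v := by
  unfold kappaFraction
  split_ifs
  exacts [le_max_left _ _, le_rfl]

lemma kappaFraction_le_one (v : ℝ) : kappaFraction n pbar x P v ≤ 1 := by
  unfold kappaFraction
  split_ifs
  exacts [max_le zero_le_one (min_le_left _ _), zero_le_one]

lemma kappaFraction_eq_zero_of_sub_neg (hp : ∀ k, 0 < pbar k) {j : Fin n}
    (hP : P - ∑ k ∈ Finset.univ.filter (fun k => x j < x k), pbar k < 0) :
    kappaFraction n pbar x P (x j) = 0 := by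
  have hgroup : 0 < ∑ k ∈ Finset.univ.filter (fun k => x k = x j), pbar k :=
    Finset.sum_pos (fun k _ => hp k) ⟨j, by simp⟩
  unfold kappaFraction
  split_ifs
  · exact max_eq_left ((min_le_right _ _).trans (div_neg_of_neg_of_pos hP hgroup).le)
  · rfl

lemma kappaFraction_le_of_le (hp : ∀ k, 0 < pbar k)
    {i j : Fin n} (hji : x j ≤ x i) :
    kappaFraction n pbar x P (x j) ≤ kappaFraction n pbar x P (x i) := by
  rcases hji.eq_or_lt with heq | hlt
  · rw [heq]
  by_cases hxj : 0 < x j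
  swap
  · simpa [kappaFraction, hxj] using kappaFraction_nonneg _
  by_cases hsat : 1 ≤ (P - ∑ k ∈ Finset.univ.filter (fun k => x i < x k), pbar k) /
      ∑ k ∈ Finset.univ.filter (fun k => x k = x i), pbar k
  · have hone : kappaFraction n pbar x P (x i) = 1 := by
      simp only [kappaFraction, if_pos (hxj.trans hlt), min_eq_left hsat,
        max_eq_right zero_le_one]
    exact hone ▸ kappaFraction_le_one _
  · -- the request is exhausted at the level of `x i`, so nothing is left for `x j`
    have hgroup : 0 < ∑ k ∈ Finset.univ.filter (fun k => x k = x i), pbar k :=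
      Finset.sum_pos (fun k _ => hp k) ⟨i, by simp⟩
    have hleft := (div_lt_one hgroup).mp (not_le.mp hsat)
    have habove := Finset.sum_filter_lt_add_sum_filter_eq_le_sum_filter_lt
      (fun k => (hp k).le) x hlt
    rw [kappaFraction_eq_zero_of_sub_neg hp (by linarith)]
    exact kappaFraction_nonneg _

lemma kappa_div_le_of_le (hp : ∀ k, 0 < pbar k)
    {i j : Fin n} (hji : x j ≤ x i) :
    kappa n pbar x P j / pbar j ≤ kappa n pbar x P i / pbar i := by
  rw [kappa_div_eq_kappaFraction (hp j).ne', kappa_div_eq_kappaFraction (hp i).ne']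
  exact kappaFraction_le_of_le hp hji

end KappaFraction

lemma ClosedLoop.apply_eq_of_apply_eq {n : ℕ} {pbar : Fin n → ℝ} {Pr : ℝ → ℝ}
    {z : ℝ → Fin n → ℝ} (hp : ∀ i, 0 < pbar i) (hcl : ClosedLoop n pbar Pr z) {s t : ℝ}
    (hs : 0 ≤ s) (hst : s ≤ t) {i j : Fin n} (hij : z s i = z s j) : z t i = z t j := by
  refine eq_of_hasDerivAt_of_sub_mul_sub_nonpos_s6 hst (fun τ hτ => hcl τ (hs.trans hτ.1) i)
    (fun τ hτ => hcl τ (hs.trans hτ.1) j) (fun τ _ => ?_) hij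
  simp only [neg_div, neg_sub_neg]
  rcases le_total (z τ j) (z τ i) with h | h
  · exact mul_nonpos_of_nonneg_of_nonpos (sub_nonneg.2 h)
      (sub_nonpos.2 (kappa_div_le_of_le hp h))
  · exact mul_nonpos_of_nonpos_of_nonneg (sub_nonpos.2 h)
      (sub_nonneg.2 (kappa_div_le_of_le hp h))

theorem closedLoop_distinct_values_nonincreasing_general (n : ℕ) (hn : 0 < n)
    (pbar : Fin n → ℝ) (Pr : ℝ → ℝ) (z : ℝ → Fin n → ℝ)
    (hp : ∀ i, 0 < pbar i)
    (hcl : ClosedLoop n pbar Pr z) :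
    (∀ s t : ℝ, 0 ≤ s → s ≤ t →
      (Finset.image (z t) Finset.univ).card ≤ (Finset.image (z s) Finset.univ).card) ∧
    ({k : ℕ | ∃ t, 0 ≤ t ∧ (Finset.image (z t) Finset.univ).card = k}.Finite ∧
      {k : ℕ | ∃ t, 0 ≤ t ∧ (Finset.image (z t) Finset.univ).card = k}.ncard ≤ n) := by
  have : Nonempty (Fin n) := Fin.pos_iff_nonempty.1 hn
  have hcounts : {k : ℕ | ∃ t, 0 ≤ t ∧ (Finset.image (z t) Finset.univ).card = k} ⊆
      Icc 1 n := by
    rintro _ ⟨t, -, rfl⟩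
    simpa using Finset.card_image_univ_mem_Icc (z t)
  refine ⟨fun s t hs hst => ?_, (finite_Icc 1 n).subset hcounts, ?_⟩
  · exact Finset.card_image_le_card_image_of_factorsThrough
      (fun i j hij => hcl.apply_eq_of_apply_eq hp hs hst hij) _
  · calc _ ≤ (Icc 1 n).ncard := ncard_le_ncard hcounts (finite_Icc 1 n)
      _ = n := by simp

/-- the number of distinct state values is non-increasing along closed-loop
trajectories; consequently the trajectory visits at most `n` partition-induced regions
(the count takes at most `n` distinct values). -/
theorem closedLoop_distinct_values_nonincreasing (n : ℕ) (hn : 0 < n)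
    (pbar : Fin n → ℝ) (Pr : ℝ → ℝ) (z : ℝ → Fin n → ℝ)
    (hp : ∀ i, 0 < pbar i) (hz : ∀ t, 0 ≤ t → ∀ i, 0 ≤ z t i)
    (hcl : ClosedLoop n pbar Pr z) :
    (∀ s t : ℝ, 0 ≤ s → s ≤ t →
      (Finset.image (z t) Finset.univ).card ≤ (Finset.image (z s) Finset.univ).card) ∧
    ({k : ℕ | ∃ t, 0 ≤ t ∧ (Finset.image (z t) Finset.univ).card = k}.Finite ∧
      {k : ℕ | ∃ t, 0 ≤ t ∧ (Finset.image (z t) Finset.univ).card = k}.ncard ≤ n) :=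
  closedLoop_distinct_values_nonincreasing_general n hn pbar Pr z hp hcl
end

section
/- A unique absolutely continuous solution of the closed-loop system ẋ(t) = −P⁻¹ κ(x(t), P^r(t)) exists for every initial condition x(0) ∈ [0,∞)^n and every piecewise-continuous reference P^r(·) ≥ 0, obtained by concatenating solutions across the finitely many regions of the equal-value partition of the state space. -/
open Set

/-!
Write `x̂` for the state extended by a coordinate pinned at `0`. The fraction `κᵢ / p̄ᵢ` of maximum
power at which device `i` runs is nondecreasing in its time-to-go and depends on the state only
through the order type of `x̂`. Hence two coordinates of `x̂` that meet never separate again (the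
square of their gap has nonpositive right derivative), and as long as the order type of `x̂` stays
that of `x̂(0)` the dynamics are an explicit non-autonomous equation, solved by an integral. At the
first time this integral breaks a strict inequality of `x̂(0)`, the number of strictly ordered
pairs of `x̂` drops. Strong induction on that number gives existence, by concatenation, and
uniqueness, since every solution follows the integral up to its own first break.
-/

open Filter Topology MeasureTheory

theorem HasDerivWithinAt.comp_add_const_Ici {E : Type*} [NormedAddCommGroup E] [NormedSpace ℝ E]
    {f : ℝ → E} {f' : E} {t a : ℝ} (h : HasDerivWithinAt f f' (Ici (t + a)) (t + a)) :
    HasDerivWithinAt (fun s => f (s + a)) f' (Ici t) t := by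
  have h' := h.scomp t ((hasDerivAt_id' t).add_const a).hasDerivWithinAt (s := Ici t)
    fun s hs => (add_le_add_iff_right a).2 hs
  rw [one_smul] at h'
  exact h'

theorem eq_zero_of_hasDerivWithinAt_Ici_of_mul_nonpos {f f' : ℝ → ℝ} {a b : ℝ}
    (hf : ContinuousOn f (Icc a b)) (hf' : ∀ x ∈ Ico a b, HasDerivWithinAt f (f' x) (Ici x) x)
    (hsign : ∀ x ∈ Ico a b, f x * f' x ≤ 0) (ha : f a = 0) (hab : a ≤ b) : f b = 0 := by
  have hsq : f b ^ 2 ≤ 0 :=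
    image_le_of_deriv_right_le_deriv_boundary (f := fun x => f x ^ 2)
      (f' := fun x => 2 * f x * f' x) (hf.pow 2)
      (fun x hx => by simpa using (hf' x hx).fun_pow 2) (B := 0) (B' := 0) (by simp [ha])
      continuousOn_const (fun _ _ => hasDerivWithinAt_const _ _ _)
      (fun x hx => by simp only [Pi.zero_apply]; linarith [hsign x hx]) ⟨hab, le_rfl⟩
  exact pow_eq_zero_iff two_ne_zero |>.1 (le_antisymm hsq (sq_nonneg _))

theorem measurable_of_continuousOn_compl_finite {α β : Type*} [TopologicalSpace α]
    [MeasurableSpace α] [OpensMeasurableSpace α] [MeasurableSingletonClass α] [TopologicalSpace β]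
    [MeasurableSpace β] [BorelSpace β] {f : α → β} {D : Set α} (hD : D.Finite)
    (hf : ContinuousOn f Dᶜ) : Measurable f :=
  measurable_of_measurable_on_compl_finite D hD hf.domRestrict.measurable

section strictPairs

variable {α β : Type*} [Fintype α] [LinearOrder β]

def strictPairs (f : α → β) : Finset (α × α) :=
  Finset.univ.filter fun p => f p.1 < f p.2

theorem card_strictPairs_lt {f g : α → β} (hmono : ∀ a b, f a ≤ f b → g a ≤ g b) {a b : α}
    (hab : f a < f b) (hba : g b ≤ g a) : (strictPairs g).card < (strictPairs f).card := by
  refine Finset.card_lt_card ((Finset.ssubset_iff_of_subset fun p hp => ?_).2 ⟨(a, b), ?_, ?_⟩)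
  · simp only [strictPairs, Finset.mem_filter, Finset.mem_univ, true_and] at hp ⊢
    exact lt_of_not_ge fun h => (hmono _ _ h).not_gt hp
  · simpa [strictPairs] using hab
  · simpa [strictPairs] using hba

end strictPairs

namespace Waterfall

variable {ι : Type*}

/-- The state extended by a coordinate `none` pinned at `0`, so that the sign conditions in
`rate` become order conditions between coordinates. -/
def augment (x : ι → ℝ) : Option ι → ℝ := fun a => a.elim 0 x

@[simp] theorem augment_none (x : ι → ℝ) : augment x none = 0 := rfl

@[simp] theorem augment_some (x : ι → ℝ) (i : ι) : augment x (some i) = x i := rfl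

@[simp] theorem augment_neg (x : ι → ℝ) (a : Option ι) : augment (-x) a = -augment x a := by
  cases a <;> simp

theorem continuous_augment_apply (a : Option ι) : Continuous fun x : ι → ℝ => augment x a := by
  cases a
  exacts [continuous_const, continuous_apply _]

theorem hasDerivWithinAt_augment {z : ℝ → ι → ℝ} {z' : ι → ℝ} {s : Set ℝ} {t : ℝ}
    (h : HasDerivWithinAt z z' s t) (a : Option ι) :
    HasDerivWithinAt (fun u => augment (z u) a) (augment z' a) s t := by
  cases a
  exacts [hasDerivWithinAt_const _ _ _, hasDerivWithinAt_pi.1 h _]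

def SameOrder (x y : ι → ℝ) : Prop :=
  ∀ a b, augment x a ≤ augment x b ↔ augment y a ≤ augment y b

def Breaks (x0 y : ι → ℝ) : Prop :=
  ∃ a b, augment x0 a < augment x0 b ∧ augment y b ≤ augment y a

theorem not_breaks_self (x : ι → ℝ) : ¬Breaks x x :=
  fun ⟨_, _, hab, hba⟩ => (hab.trans_le hba).false

theorem sameOrder_of_not_breaks {x0 y : ι → ℝ}
    (heq : ∀ a b, augment x0 a = augment x0 b → augment y a = augment y b)
    (h : ¬Breaks x0 y) : SameOrder x0 y := by
  simp only [Breaks, not_exists, not_and, not_le] at h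
  refine fun a b => ⟨fun hab => ?_, fun hab => not_lt.1 fun hba => (h b a hba).not_ge hab⟩
  rcases hab.lt_or_eq with hlt | heq'
  exacts [(h a b hlt).le, (heq a b heq').le]

theorem augment_le_of_sameOrder_on_Ico {x0 : ι → ℝ} {w : ℝ → ι → ℝ} (hw : Continuous w)
    {T : ℝ} (hT : 0 < T) (h : ∀ t ∈ Ico 0 T, SameOrder x0 (w t)) {a b : Option ι}
    (hab : augment x0 a ≤ augment x0 b) :
    augment (w T) a ≤ augment (w T) b :=
  le_on_closure (fun t ht => (h t ht a b).1 hab)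
    ((continuous_augment_apply a).comp hw).continuousOn
    ((continuous_augment_apply b).comp hw).continuousOn
    (by rw [closure_Ico hT.ne]; exact right_mem_Icc.2 hT.le)

def breakTimes (x0 : ι → ℝ) (w : ℝ → ι → ℝ) : Set ℝ :=
  {t | 0 ≤ t ∧ Breaks x0 (w t)}

variable [Fintype ι]

theorem isClosed_breakTimes (x0 : ι → ℝ) {w : ℝ → ι → ℝ} (hw : ContinuousOn w (Ici 0)) :
    IsClosed (breakTimes x0 w) := by
  have : breakTimes x0 w = ⋃ p ∈ strictPairs (augment x0),
      {t ∈ Ici 0 | augment (w t) p.2 ≤ augment (w t) p.1} := by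
    ext t
    simp [breakTimes, Breaks, strictPairs]
  rw [this]
  exact isClosed_biUnion_finset fun p _ => isClosed_Ici.isClosed_le
    ((continuous_augment_apply _).comp_continuousOn hw)
    ((continuous_augment_apply _).comp_continuousOn hw)

noncomputable def rate (pbar x : ι → ℝ) (P : ℝ) (i : ι) : ℝ :=
  if 0 < x i then
    max 0 (min 1 ((P - ∑ j ∈ Finset.univ.filter (fun j => x i < x j), pbar j) /
      ∑ j ∈ Finset.univ.filter (fun j => x j = x i), pbar j))
  else 0

theorem kappa_eq_mul_rate {n : ℕ} (pbar x : Fin n → ℝ) (P : ℝ) (i : Fin n) :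
    kappa n pbar x P i = pbar i * rate pbar x P i := by
  unfold kappa rate
  split_ifs <;> simp

theorem rate_nonneg (pbar x : ι → ℝ) (P : ℝ) (i : ι) : 0 ≤ rate pbar x P i := by
  unfold rate
  split_ifs
  exacts [le_max_left _ _, le_rfl]

theorem rate_le_one (pbar x : ι → ℝ) (P : ℝ) (i : ι) : rate pbar x P i ≤ 1 := by
  unfold rate
  split_ifs
  exacts [max_le zero_le_one (min_le_left _ _), zero_le_one]

theorem rate_of_nonpos {pbar x : ι → ℝ} {P : ℝ} {i : ι} (h : x i ≤ 0) : rate pbar x P i = 0 :=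
  if_neg h.not_gt

theorem norm_rate_le_one (pbar x : ι → ℝ) (P : ℝ) : ‖rate pbar x P‖ ≤ 1 :=
  (pi_norm_le_iff_of_nonneg zero_le_one).2 fun i => by
    rw [Real.norm_of_nonneg (rate_nonneg pbar x P i)]
    exact rate_le_one pbar x P i

theorem continuous_rate (pbar x : ι → ℝ) : Continuous (rate pbar x) := by
  refine continuous_pi fun i => ?_
  by_cases h : 0 < x i
  · simp only [rate, if_pos h]
    fun_prop
  · simp only [rate, if_neg h, continuous_const]

theorem rate_mono {pbar : ι → ℝ} (hp : ∀ i, 0 < pbar i) (x : ι → ℝ) (P : ℝ) {i j : ι}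
    (hji : x j ≤ x i) : rate pbar x P j ≤ rate pbar x P i := by
  rcases hji.lt_or_eq with hlt | heq
  swap
  · simp only [rate, heq, le_rfl]
  by_cases hj : 0 < x j
  swap
  · rw [rate_of_nonpos (not_lt.1 hj)]
    exact rate_nonneg pbar x P i
  have hB : ∀ k, 0 < ∑ m ∈ Finset.univ.filter (fun m => x m = x k), pbar m := fun k =>
    Finset.sum_pos (fun m _ => hp m) ⟨k, by simp⟩
  have hAB : ∑ m ∈ Finset.univ.filter (fun m => x i < x m), pbar m +
      ∑ m ∈ Finset.univ.filter (fun m => x m = x i), pbar m ≤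
      ∑ m ∈ Finset.univ.filter (fun m => x j < x m), pbar m := by
    simp only [Finset.sum_filter, ← Finset.sum_add_distrib]
    refine Finset.sum_le_sum fun k _ => ?_
    split_ifs <;> linarith [hp k]
  simp only [rate, if_pos hj, if_pos (hj.trans hlt)]
  -- Either the request is used up before the group of `j`, or it saturates the group of `i`.
  by_cases hP : P < ∑ m ∈ Finset.univ.filter (fun m => x i < x m), pbar m +
      ∑ m ∈ Finset.univ.filter (fun m => x m = x i), pbar m
  · refine (max_le le_rfl ((min_le_right _ _).trans ?_)).trans (le_max_left _ _)
    exact div_nonpos_of_nonpos_of_nonneg (by linarith) (hB j).le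
  · refine (max_le zero_le_one (min_le_left _ _)).trans (le_max_of_le_right (le_min le_rfl ?_))
    rw [le_div_iff₀ (hB i)]
    linarith

variable {pbar : ι → ℝ}

theorem augment_rate_mono (hp : ∀ i, 0 < pbar i) (x : ι → ℝ) (P : ℝ) {a b : Option ι}
    (h : augment x b ≤ augment x a) : augment (rate pbar x P) b ≤ augment (rate pbar x P) a := by
  cases a <;> cases b <;> simp only [augment_none, augment_some] at h ⊢
  · exact le_rfl
  · exact (rate_of_nonpos h).le
  · exact rate_nonneg pbar x P _
  · exact rate_mono hp x P h

theorem augment_rate_congr (hp : ∀ i, 0 < pbar i) (x : ι → ℝ) (P : ℝ) {a b : Option ι}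
    (h : augment x a = augment x b) : augment (rate pbar x P) a = augment (rate pbar x P) b :=
  le_antisymm (augment_rate_mono hp x P h.le) (augment_rate_mono hp x P h.ge)

theorem rate_eq_of_sameOrder {x y : ι → ℝ} (h : SameOrder x y) (pbar : ι → ℝ) (P : ℝ) :
    rate pbar x P = rate pbar y P := by
  have hlt : ∀ i j, x i < x j ↔ y i < y j := fun i j => by
    simpa using not_congr (h (some j) (some i))
  have heq : ∀ i j, x i = x j ↔ y i = y j := fun i j => by
    simpa [le_antisymm_iff] using and_congr (h (some i) (some j)) (h (some j) (some i))
  have hpos : ∀ i, 0 < x i ↔ 0 < y i := fun i => by simpa using not_congr (h (some i) none)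
  funext i
  simp only [rate, hpos, hlt, heq]

structure IsSolution (pbar x0 : ι → ℝ) (Pr : ℝ → ℝ) (z : ℝ → ι → ℝ) : Prop where
  map_zero : z 0 = x0
  continuousOn : ContinuousOn z (Ici 0)
  hasDerivWithinAt : ∀ t, 0 ≤ t → HasDerivWithinAt z (-rate pbar (z t) (Pr t)) (Ici t) t

variable {x0 : ι → ℝ} {Pr : ℝ → ℝ} {z : ℝ → ι → ℝ}

theorem IsSolution.augment_eq_of_le (hp : ∀ i, 0 < pbar i) (hz : IsSolution pbar x0 Pr z)
    {a b : Option ι} {T t : ℝ} (hT : 0 ≤ T) (hTt : T ≤ t)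
    (h : augment (z T) a = augment (z T) b) : augment (z t) a = augment (z t) b := by
  have hcont : ContinuousOn (fun s => augment (z s) a - augment (z s) b) (Icc T t) :=
    (((continuous_augment_apply a).comp_continuousOn hz.continuousOn).sub
      ((continuous_augment_apply b).comp_continuousOn hz.continuousOn)).mono
      fun s hs => hT.trans hs.1
  refine sub_eq_zero.1 <| eq_zero_of_hasDerivWithinAt_Ici_of_mul_nonpos
    (f := fun s => augment (z s) a - augment (z s) b)
    (f' := fun s => augment (rate pbar (z s) (Pr s)) b - augment (rate pbar (z s) (Pr s)) a)
    hcont (fun s hs => ?_) (fun s _ => ?_) (sub_eq_zero.2 h) hTt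
  · have hd := hz.hasDerivWithinAt s (hT.trans hs.1)
    exact ((hasDerivWithinAt_augment hd a).sub (hasDerivWithinAt_augment hd b)).congr_deriv
      (by simp only [augment_neg]; ring)
  · rcases le_total (augment (z s) b) (augment (z s) a) with h | h
    · exact mul_nonpos_of_nonneg_of_nonpos (sub_nonneg.2 h)
        (sub_nonpos.2 (augment_rate_mono hp _ _ h))
    · exact mul_nonpos_of_nonpos_of_nonneg (sub_nonpos.2 h)
        (sub_nonneg.2 (augment_rate_mono hp _ _ h))

theorem IsSolution.sameOrder_of_notMem (hp : ∀ i, 0 < pbar i) (hz : IsSolution pbar x0 Pr z)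
    {t : ℝ} (ht : 0 ≤ t) (h : t ∉ breakTimes x0 z) : SameOrder x0 (z t) :=
  sameOrder_of_not_breaks
    (fun a b hab => hz.augment_eq_of_le hp le_rfl ht (by rwa [hz.map_zero]))
    fun hb => h ⟨ht, hb⟩

theorem IsSolution.shift (hz : IsSolution pbar x0 Pr z) {T : ℝ} (hT : 0 ≤ T) :
    IsSolution pbar (z T) (fun s => Pr (s + T)) (fun s => z (s + T)) where
  map_zero := by simp
  continuousOn := hz.continuousOn.comp (continuous_add_const (m := T)).continuousOn
    fun s hs => add_nonneg hs hT
  hasDerivWithinAt t ht := (hz.hasDerivWithinAt (t + T) (add_nonneg ht hT)).comp_add_const_Ici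

theorem IsSolution.concat {y w : ℝ → ι → ℝ} {T : ℝ}
    (hw : IsSolution pbar (y T) (fun s => Pr (s + T)) w) (hT : 0 ≤ T) (hy0 : y 0 = x0)
    (hy : ContinuousOn y (Icc 0 T))
    (hy' : ∀ t ∈ Ico 0 T, HasDerivWithinAt y (-rate pbar (y t) (Pr t)) (Ici t) t) :
    IsSolution pbar x0 Pr (fun t => if t < T then y t else w (t - T)) := by
  set z := fun t => if t < T then y t else w (t - T)
  have hzy : EqOn z y (Icc 0 T) := fun t ht => by
    rcases ht.2.lt_or_eq with h | rfl
    · simp [z, h]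
    · simp [z, hw.map_zero]
  have hzw : EqOn z (fun t => w (t - T)) (Ici T) := fun t ht => by
    simp [z, not_lt.2 (mem_Ici.1 ht)]
  refine ⟨(hzy ⟨le_rfl, hT⟩).trans hy0, ?_, fun t ht => ?_⟩
  · rw [← Icc_union_Ici_eq_Ici hT]
    refine (hy.congr hzy).union_of_isClosed ?_ isClosed_Icc isClosed_Ici
    exact (hw.continuousOn.comp ((continuous_sub_right T).continuousOn (s := Ici T))
      fun s hs => sub_nonneg.2 (mem_Ici.1 hs)).congr hzw
  rcases lt_or_ge t T with htT | htT
  · rw [hzy ⟨ht, htT.le⟩]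
    refine (hy' t ⟨ht, htT⟩).congr_of_eventuallyEq ?_ (hzy ⟨ht, htT.le⟩)
    filter_upwards [Ico_mem_nhdsGE htT] with s hs using hzy ⟨ht.trans hs.1, hs.2.le⟩
  · have hd := hw.hasDerivWithinAt (t - T) (sub_nonneg.2 htT)
    rw [sub_eq_add_neg, ← sub_eq_add_neg, sub_add_cancel] at hd
    rw [hzw htT]
    exact hd.comp_add_const_Ici.congr (fun s hs => hzw (htT.trans hs)) (hzw htT)

structure IsAdmissibleReference (Pr : ℝ → ℝ) : Prop where
  measurable : Measurable Pr
  continuousWithinAt_Ici : ∀ t, ContinuousWithinAt Pr (Ici t) t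

theorem IsAdmissibleReference.comp_add_const (hPr : IsAdmissibleReference Pr) (T : ℝ) :
    IsAdmissibleReference fun s => Pr (s + T) where
  measurable := hPr.measurable.comp (measurable_add_const T)
  continuousWithinAt_Ici t := (hPr.continuousWithinAt_Ici (t + T)).comp (f := fun s => s + T)
    (continuous_add_const (m := T)).continuousWithinAt
    fun _ hs => (add_le_add_iff_right T).2 (mem_Ici.1 hs)

/-- The solution of the dynamics with the order type of the state frozen at that of `x0`. -/
noncomputable def frozenFlow (pbar x0 : ι → ℝ) (Pr : ℝ → ℝ) (t : ℝ) : ι → ℝ :=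
  x0 - ∫ s in (0 : ℝ)..t, rate pbar x0 (Pr s)

theorem frozenFlow_zero : frozenFlow pbar x0 Pr 0 = x0 := by
  simp [frozenFlow]

theorem intervalIntegrable_rate_comp (pbar x0 : ι → ℝ) (hPr : IsAdmissibleReference Pr)
    (a b : ℝ) :
    IntervalIntegrable (fun s => rate pbar x0 (Pr s)) volume a b :=
  (intervalIntegrable_const (c := (1 : ℝ))).mono_fun
    ((continuous_rate pbar x0).measurable.comp hPr.measurable).aestronglyMeasurable
    (ae_of_all _ fun s => by simpa using norm_rate_le_one pbar x0 (Pr s))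

theorem continuous_frozenFlow (pbar x0 : ι → ℝ) (hPr : IsAdmissibleReference Pr) :
    Continuous (frozenFlow pbar x0 Pr) :=
  continuous_const.sub
    (intervalIntegral.continuous_primitive (intervalIntegrable_rate_comp pbar x0 hPr) 0)

theorem hasDerivWithinAt_frozenFlow (pbar x0 : ι → ℝ) (hPr : IsAdmissibleReference Pr) (t : ℝ) :
    HasDerivWithinAt (frozenFlow pbar x0 Pr) (-rate pbar x0 (Pr t)) (Ici t) t := by
  have hg := ((continuous_rate pbar x0).measurable.comp hPr.measurable).stronglyMeasurable
  exact (intervalIntegral.integral_hasDerivWithinAt_right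
    (intervalIntegrable_rate_comp pbar x0 hPr 0 t) hg.stronglyMeasurableAtFilter
    (((continuous_rate pbar x0).continuousAt.comp_continuousWithinAt
      (hPr.continuousWithinAt_Ici t)).mono Ioi_subset_Ici_self)).const_sub x0

section frozenFlow

variable (hp : ∀ i, 0 < pbar i) (hPr : IsAdmissibleReference Pr)
include hp hPr

theorem augment_frozenFlow_eq {a b : Option ι}
    (hab : augment x0 a = augment x0 b) {t : ℝ} (ht : 0 ≤ t) :
    augment (frozenFlow pbar x0 Pr t) a = augment (frozenFlow pbar x0 Pr t) b := by
  have hζ := continuous_frozenFlow pbar x0 hPr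
  have hcont := (((continuous_augment_apply a).comp hζ).sub
    ((continuous_augment_apply b).comp hζ)).continuousOn (s := Icc 0 t)
  have hconst := constant_of_has_deriv_right_zero hcont (fun s _ => ?_) t ⟨ht, le_rfl⟩
  · simpa [frozenFlow_zero, hab, sub_eq_zero] using hconst
  · have hd := hasDerivWithinAt_frozenFlow pbar x0 hPr s
    exact ((hasDerivWithinAt_augment hd a).sub (hasDerivWithinAt_augment hd b)).congr_deriv
      (by rw [augment_neg, augment_neg, augment_rate_congr hp _ _ hab, sub_self])

theorem frozenFlow_sameOrder_of_notMem {t : ℝ} (ht : 0 ≤ t)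
    (h : t ∉ breakTimes x0 (frozenFlow pbar x0 Pr)) : SameOrder x0 (frozenFlow pbar x0 Pr t) :=
  sameOrder_of_not_breaks (fun _ _ hab => augment_frozenFlow_eq hp hPr hab ht)
    fun hb => h ⟨ht, hb⟩

theorem hasDerivWithinAt_frozenFlow_of_notMem {t : ℝ} (ht : 0 ≤ t)
    (h : t ∉ breakTimes x0 (frozenFlow pbar x0 Pr)) :
    HasDerivWithinAt (frozenFlow pbar x0 Pr)
      (-rate pbar (frozenFlow pbar x0 Pr t) (Pr t)) (Ici t) t := by
  rw [← rate_eq_of_sameOrder (frozenFlow_sameOrder_of_notMem hp hPr ht h)]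
  exact hasDerivWithinAt_frozenFlow pbar x0 hPr t

theorem IsSolution.eqOn_frozenFlow (hz : IsSolution pbar x0 Pr z) {b : ℝ}
    (hno : ∀ s ∈ Ico 0 b, s ∉ breakTimes x0 z) : EqOn z (frozenFlow pbar x0 Pr) (Icc 0 b) := by
  intro t ht
  have hconst := constant_of_has_deriv_right_zero
    ((hz.continuousOn.mono Icc_subset_Ici_self).sub
      (continuous_frozenFlow pbar x0 hPr).continuousOn)
    (fun s hs => ?_) t ht
  · simpa [hz.map_zero, frozenFlow_zero, sub_eq_zero] using hconst
  · have hd := (hz.hasDerivWithinAt s hs.1).sub (hasDerivWithinAt_frozenFlow pbar x0 hPr s)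
    rwa [← rate_eq_of_sameOrder (hz.sameOrder_of_notMem hp hs.1 (hno s hs)), sub_self] at hd

theorem IsSolution.eq_frozenFlow (hz : IsSolution pbar x0 Pr z) {t : ℝ}
    (ht : 0 ≤ t) (hno : ∀ s ∈ Ico 0 t, s ∉ breakTimes x0 (frozenFlow pbar x0 Pr)) :
    z t = frozenFlow pbar x0 Pr t := by
  rcases (breakTimes x0 z ∩ Icc 0 t).eq_empty_or_nonempty with hS | hS
  · exact hz.eqOn_frozenFlow hp hPr
      (fun s hs hsz => hS.subset ⟨hsz, Ico_subset_Icc_self hs⟩) ⟨ht, le_rfl⟩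
  -- `z` follows the frozen flow up to its first break `τ`, so `τ` is a break of the frozen flow.
  obtain ⟨τ, ⟨hτz, hτ0, hτt⟩, hτmin⟩ :=
    (isCompact_Icc.inter_left (isClosed_breakTimes x0 hz.continuousOn)).exists_isLeast hS
  have hEq := hz.eqOn_frozenFlow hp hPr (b := τ)
    fun s hs hsz => (hτmin ⟨hsz, hs.1, hs.2.le.trans hτt⟩).not_gt hs.2
  obtain rfl : τ = t := hτt.eq_or_lt.resolve_right fun hlt =>
    hno τ ⟨hτ0, hlt⟩ ⟨hτ0, hEq ⟨hτ0, le_rfl⟩ ▸ hτz.2⟩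
  exact hEq ⟨hτ0, le_rfl⟩

theorem card_strictPairs_frozenFlow_sInf_lt
    (hE : (breakTimes x0 (frozenFlow pbar x0 Pr)).Nonempty) :
    (strictPairs (augment
      (frozenFlow pbar x0 Pr (sInf (breakTimes x0 (frozenFlow pbar x0 Pr)))))).card <
      (strictPairs (augment x0)).card := by
  set ζ := frozenFlow pbar x0 Pr
  have hbdd : BddBelow (breakTimes x0 ζ) := ⟨0, fun t ht => ht.1⟩
  have hT :=
    (isClosed_breakTimes x0 (continuous_frozenFlow pbar x0 hPr).continuousOn).csInf_mem hE hbdd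
  have hTpos : 0 < sInf (breakTimes x0 ζ) := hT.1.lt_of_ne fun h0 => by
    have := hT.2
    rw [← h0, frozenFlow_zero] at this
    exact not_breaks_self x0 this
  obtain ⟨a, b, hab, hba⟩ := hT.2
  exact card_strictPairs_lt (fun a b => augment_le_of_sameOrder_on_Ico
    (continuous_frozenFlow pbar x0 hPr) hTpos (fun t ht => frozenFlow_sameOrder_of_notMem
      hp hPr ht.1 (notMem_of_lt_csInf ht.2 hbdd))) hab hba

end frozenFlow

theorem existsUnique_isSolution (hp : ∀ i, 0 < pbar i) (x0 : ι → ℝ) (Pr : ℝ → ℝ)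
    (hPr : IsAdmissibleReference Pr) :
    ∃ z, IsSolution pbar x0 Pr z ∧ ∀ z', IsSolution pbar x0 Pr z' → ∀ t, 0 ≤ t → z' t = z t := by
  induction hN : (strictPairs (augment x0)).card using Nat.strong_induction_on
    generalizing x0 Pr with
  | _ N ih =>
  subst hN
  set ζ := frozenFlow pbar x0 Pr
  rcases (breakTimes x0 ζ).eq_empty_or_nonempty with hE | hE
  · have hno : ∀ t, t ∉ breakTimes x0 ζ := fun t => hE ▸ notMem_empty t
    exact ⟨ζ, ⟨frozenFlow_zero, (continuous_frozenFlow pbar x0 hPr).continuousOn,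
      fun t ht => hasDerivWithinAt_frozenFlow_of_notMem hp hPr ht (hno t)⟩,
      fun z hz t ht => hz.eq_frozenFlow hp hPr ht fun s _ => hno s⟩
  set T := sInf (breakTimes x0 ζ)
  have hbdd : BddBelow (breakTimes x0 ζ) := ⟨0, fun t ht => ht.1⟩
  have hT : 0 ≤ T := le_csInf hE fun t ht => ht.1
  have hbefore : ∀ t ∈ Ico 0 T, t ∉ breakTimes x0 ζ := fun t ht =>
    notMem_of_lt_csInf ht.2 hbdd
  obtain ⟨w, hw, hw_unique⟩ := ih _ (card_strictPairs_frozenFlow_sInf_lt hp hPr hE)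
    (ζ T) (fun s => Pr (s + T)) (hPr.comp_add_const T) rfl
  refine ⟨_, hw.concat hT frozenFlow_zero (continuous_frozenFlow pbar x0 hPr).continuousOn
    fun t ht => hasDerivWithinAt_frozenFlow_of_notMem hp hPr ht.1 (hbefore t ht),
    fun z hz t ht => ?_⟩
  have hzζ : ∀ s ∈ Icc 0 T, z s = ζ s := fun s hs =>
    hz.eq_frozenFlow hp hPr hs.1 fun r hr => hbefore r ⟨hr.1, hr.2.trans_le hs.2⟩
  rcases lt_or_ge t T with htT | htT
  · simp [htT, hzζ t ⟨ht, htT.le⟩]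
  · have := hw_unique _ (hzζ T ⟨hT, le_rfl⟩ ▸ hz.shift hT) (t - T) (sub_nonneg.2 htT)
    simpa [not_lt.2 htT] using this

theorem isSolution_iff {n : ℕ} {pbar x0 : Fin n → ℝ} {Pr : ℝ → ℝ} {z : ℝ → Fin n → ℝ}
    (hp : ∀ i, 0 < pbar i) :
    IsSolution pbar x0 Pr z ↔
      z 0 = x0 ∧ (∀ i, ContinuousOn (fun s => z s i) (Ici 0)) ∧
        ∀ t, 0 ≤ t → ∀ i, HasDerivWithinAt (fun s => z s i)
          (-(kappa n pbar (z t) (Pr t) i) / pbar i) (Ici t) t := by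
  simp only [kappa_eq_mul_rate, neg_div, mul_div_cancel_left₀ _ (hp _).ne',
    ← continuousOn_pi]
  refine ⟨fun ⟨h0, hc, hd⟩ => ⟨h0, hc, fun t ht => hasDerivWithinAt_pi.1 (hd t ht)⟩,
    fun ⟨h0, hc, hd⟩ => ⟨h0, hc, fun t ht => hasDerivWithinAt_pi.2 (hd t ht)⟩⟩

end Waterfall

theorem closedLoop_exists_unique_general (n : ℕ) (pbar x0 : Fin n → ℝ) (Pr : ℝ → ℝ)
    (hp : ∀ i, 0 < pbar i)
    (hPrRight : ∀ t, ContinuousWithinAt Pr (Set.Ici t) t)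
    (hPw : ∃ D : Set ℝ, D.Finite ∧ ContinuousOn Pr Dᶜ) :
    ∃ z : ℝ → Fin n → ℝ,
      (z 0 = x0 ∧ (∀ i, ContinuousOn (fun s => z s i) (Set.Ici (0 : ℝ))) ∧
        (∀ t, 0 ≤ t → ∀ i,
          HasDerivWithinAt (fun s => z s i)
            (-(kappa n pbar (z t) (Pr t) i) / pbar i) (Set.Ici t) t)) ∧
      (∀ z' : ℝ → Fin n → ℝ,
        (z' 0 = x0 ∧ (∀ i, ContinuousOn (fun s => z' s i) (Set.Ici (0 : ℝ))) ∧
          (∀ t, 0 ≤ t → ∀ i,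
            HasDerivWithinAt (fun s => z' s i)
              (-(kappa n pbar (z' t) (Pr t) i) / pbar i) (Set.Ici t) t)) →
        ∀ t, 0 ≤ t → z' t = z t) := by
  obtain ⟨D, hD, hcont⟩ := hPw
  obtain ⟨z, hz, hunique⟩ := Waterfall.existsUnique_isSolution hp x0 Pr
    ⟨measurable_of_continuousOn_compl_finite hD hcont, hPrRight⟩
  exact ⟨z, (Waterfall.isSolution_iff hp).1 hz,
    fun z' hz' => hunique z' ((Waterfall.isSolution_iff hp).2 hz')⟩

/-- existence and uniqueness (on `[0, ∞)`) of an absolutely continuous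
solution of the closed-loop system, for every nonnegative initial condition and every
piecewise-continuous (right-continuous) nonnegative reference. Right derivatives are
used at every time. -/
theorem closedLoop_exists_unique (n : ℕ) (pbar x0 : Fin n → ℝ) (Pr : ℝ → ℝ)
    (hp : ∀ i, 0 < pbar i) (hx0 : ∀ i, 0 ≤ x0 i) (hPr : ∀ t, 0 ≤ Pr t)
    (hPrRight : ∀ t, ContinuousWithinAt Pr (Set.Ici t) t)
    (hPw : ∃ D : Set ℝ, D.Finite ∧ ContinuousOn Pr Dᶜ) :
    ∃ z : ℝ → Fin n → ℝ,
      (z 0 = x0 ∧ (∀ i, ContinuousOn (fun s => z s i) (Set.Ici (0 : ℝ))) ∧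
        (∀ t, 0 ≤ t → ∀ i,
          HasDerivWithinAt (fun s => z s i)
            (-(kappa n pbar (z t) (Pr t) i) / pbar i) (Set.Ici t) t)) ∧
      (∀ z' : ℝ → Fin n → ℝ,
        (z' 0 = x0 ∧ (∀ i, ContinuousOn (fun s => z' s i) (Set.Ici (0 : ℝ))) ∧
          (∀ t, 0 ≤ t → ∀ i,
            HasDerivWithinAt (fun s => z' s i)
              (-(kappa n pbar (z' t) (Pr t) i) / pbar i) (Set.Ici t) t)) →
        ∀ t, 0 ≤ t → z' t = z t) :=
  closedLoop_exists_unique_general n pbar x0 Pr hp hPrRight hPw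
end

section
/- Consequently, the longest-time-to-go-first policy maximises time to failure: for any reference signal P^r and any initial state x, Θ_{p̄, z*}(P^r) ≥ Θ_{p̄, z̃}(P^r), i.e., the supremum of times t such that the truncated reference P^r_{[0,t)} is feasible along the policy's trajectory is at least that along any other admissible trajectory. -/
open Set

/-!
Write `E x b = ∑ i, p i * min (x i) b` for the most energy the state `x` can deliver within a
horizon `b`. The waterfall policy drains the devices with the longest time-to-go first, so over one
Euler step it loses no more of `E · b` than any other admissible control, uniformly in `b`. Hence
the surplus `⨅ b ≥ 0, E (z* t) b - E (z̃ t) b`, which vanishes at `t = 0`, has a nonnegative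
lower right Dini derivative and stays nonnegative up to `T`. Minimising a quadratic overload
penalty over the couplings of `p` with itself turns this domination into a coupling `N` with
`∑ i, N i j * z̃ i ≤ p j * z* j` (a finite Strassen theorem). Letting device `j` of `z*` imitate
the `N`-mixture of the devices of `z̃` transports every feasible schedule from `z̃ T` to one from
`z* T`, so the time to failure from `z* T` is at least as large.
-/

open Finset

lemma abs_min_sub_min_le (a a' b : ℝ) : |min a b - min a' b| ≤ |a - a'| := by
  simpa using abs_min_sub_min_le_max a b a' b

lemma min_add_sub_min_mem_Icc (x b : ℝ) {h : ℝ} (hh : 0 ≤ h) :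
    min x (b + h) - min x b ∈ Set.Icc 0 h := by
  constructor <;> rcases le_total x b with h1 | h1 <;> rcases le_total x (b + h) with h2 | h2 <;>
    simp only [min_eq_left, min_eq_right, h1, h2] <;> linarith

lemma min_sub_eq_min_sub_max {x a b h : ℝ} (ha : 0 ≤ a) (hah : a ≤ h) :
    min (x - a) b = min x b - max (a - (min x (b + h) - min x b)) 0 := by
  simp only [min_def, max_def]
  split_ifs <;> linarith

lemma sum_filter_le_eq_sum_filter_lt_add {ι α M : Type*} [Fintype ι] [LinearOrder α]
    [AddCommMonoid M] (f : ι → M) (x : ι → α) (c : α) :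
    ∑ k with c ≤ x k, f k = ∑ k with c < x k, f k + ∑ k with x k = c, f k := by
  simp only [sum_filter, ← sum_add_distrib]
  refine sum_congr rfl fun k _ => ?_
  rcases lt_trichotomy c (x k) with h | h | h
  · simp [h.le, h, h.ne']
  · simp [h]
  · simp [h.not_ge, h.not_gt, h.ne]

section Waterfall

variable {ι : Type*} {p x v : ι → ℝ} {h : ℝ}

/-- The properties of the longest-time-to-go-first policy used below: a device with a longer
time-to-go is saturated before a shorter one draws power, and devices with equal time-to-go run at
the same fraction `v i / p i` of their maximum power. -/
structure IsWaterfall (p x v : ι → ℝ) : Prop where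
  mem_Icc : ∀ i, v i ∈ Set.Icc 0 (p i)
  eq_of_lt : ∀ i j, 0 < v i → x i < x j → v j = p j
  mul_eq_of_eq : ∀ i j, x i = x j → v i * p j = v j * p i

/-- `p i * (min (x i) (b + h) - min (x i) b)` is the energy device `i` holds between the levels
`b` and `b + h`. If one device of a waterfall control consumes more than that during a step of
length `h`, so that it dips below `b`, then every device consumes at least what it holds there. -/
lemma IsWaterfall.band_le_of_band_lt (hv : IsWaterfall p x v) (hp : ∀ i, 0 < p i) (hh : 0 < h)
    (hsep : ∀ i j, x i ≠ x j → h ≤ |x i - x j|) (b : ℝ) {i : ι}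
    (hi : p i * (min (x i) (b + h) - min (x i) b) < h * v i) (j : ι) :
    p j * (min (x j) (b + h) - min (x j) b) ≤ h * v j := by
  have hc := fun k => min_add_sub_min_mem_Icc (x k) b hh.le
  have hvi : 0 < v i := pos_of_mul_pos_right ((mul_nonneg (hp i).le (hc i).1).trans_lt hi) hh.le
  have hxi : x i < b + h := by
    by_contra hxi
    rw [min_eq_right (not_lt.1 hxi), min_eq_right (by linarith)] at hi
    nlinarith [(hv.mem_Icc i).2]
  rcases lt_trichotomy (x i) (x j) with hij | hij | hij
  · rw [hv.eq_of_lt i j hvi hij, mul_comm h]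
    exact mul_le_mul_of_nonneg_left (hc j).2 (hp j).le
  · have hshare := hv.mul_eq_of_eq i j hij
    rw [← hij]
    refine le_of_mul_le_mul_left ?_ (hp i)
    nlinarith [hp j]
  · have hxj : x j ≤ b := by
      by_contra hxj
      have := hsep j i hij.ne
      rw [abs_of_neg (by linarith)] at this
      linarith
    rw [min_eq_left hxj, min_eq_left (by linarith), sub_self, mul_zero]
    exact mul_nonneg hh.le (hv.mem_Icc j).1

variable [Fintype ι]

lemma IsWaterfall.sum_loss_le (hv : IsWaterfall p x v) (hp : ∀ i, 0 < p i) (hh : 0 < h)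
    (hsep : ∀ i j, x i ≠ x j → h ≤ |x i - x j|) (b : ℝ) :
    ∑ i, max (h * v i - p i * (min (x i) (b + h) - min (x i) b)) 0 ≤
      max (∑ i, (h * v i - p i * (min (x i) (b + h) - min (x i) b))) 0 := by
  by_cases hloss : ∃ i, p i * (min (x i) (b + h) - min (x i) b) < h * v i
  · obtain ⟨i, hi⟩ := hloss
    rw [sum_congr rfl fun j _ =>
      max_eq_left (sub_nonneg.2 (hv.band_le_of_band_lt hp hh hsep b hi j))]
    exact le_max_left _ _
  · simp only [not_exists, not_lt] at hloss
    rw [sum_eq_zero fun i _ => max_eq_right (sub_nonpos.2 (hloss i))]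
    exact le_max_right _ _

end Waterfall

section Kappa

variable {n : ℕ} {pbar x : Fin n → ℝ} {ρ : ℝ}

noncomputable def levelFraction (pbar x : Fin n → ℝ) (ρ c : ℝ) : ℝ :=
  max 0 (min 1 ((ρ - ∑ j with c < x j, pbar j) / ∑ j with x j = c, pbar j))

lemma kappa_apply (i : Fin n) :
    kappa n pbar x ρ i = if 0 < x i then pbar i * levelFraction pbar x ρ (x i) else 0 := rfl

lemma levelFraction_mem_Icc (c : ℝ) : levelFraction pbar x ρ c ∈ Set.Icc 0 1 :=
  ⟨le_max_left _ _, max_le zero_le_one (min_le_left _ _)⟩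

lemma kappa_mem_Icc (hp : ∀ i, 0 < pbar i) (i : Fin n) :
    kappa n pbar x ρ i ∈ Set.Icc 0 (pbar i) := by
  have := levelFraction_mem_Icc (pbar := pbar) (x := x) (ρ := ρ) (x i)
  rw [kappa_apply]
  split_ifs
  · exact ⟨mul_nonneg (hp i).le this.1, mul_le_of_le_one_right (hp i).le this.2⟩
  · exact ⟨le_rfl, (hp i).le⟩

lemma sum_filter_eq_pos (hp : ∀ i, 0 < pbar i) (i : Fin n) : 0 < ∑ j with x j = x i, pbar j :=
  sum_pos (fun j _ => hp j) ⟨i, by simp⟩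

lemma mul_levelFraction_le (hp : ∀ i, 0 < pbar i) {i : Fin n}
    (h : 0 < levelFraction pbar x ρ (x i)) :
    (∑ j with x j = x i, pbar j) * levelFraction pbar x ρ (x i) ≤
      ρ - ∑ j with x i < x j, pbar j := by
  unfold levelFraction at h ⊢
  rw [← le_div_iff₀' (sum_filter_eq_pos hp i)]
  rcases le_total ((ρ - ∑ j with x i < x j, pbar j) / ∑ j with x j = x i, pbar j) 0 with hq | hq
  · rw [max_eq_left ((min_le_right _ _).trans hq)] at h
    exact absurd h (lt_irrefl 0)
  · exact max_le hq (min_le_right _ _)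

lemma levelFraction_eq_one (hp : ∀ i, 0 < pbar i) {j : Fin n}
    (h : ∑ k with x j ≤ x k, pbar k ≤ ρ) : levelFraction pbar x ρ (x j) = 1 := by
  rw [sum_filter_le_eq_sum_filter_lt_add] at h
  have hq : 1 ≤ (ρ - ∑ k with x j < x k, pbar k) / ∑ k with x k = x j, pbar k := by
    rw [one_le_div (sum_filter_eq_pos hp j)]
    linarith
  rw [levelFraction, min_eq_left hq, max_eq_right zero_le_one]

lemma kappa_eq_of_lt (hp : ∀ i, 0 < pbar i) {i j : Fin n} (hi : 0 < kappa n pbar x ρ i)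
    (hij : x i < x j) : kappa n pbar x ρ j = pbar j := by
  rw [kappa_apply] at hi ⊢
  split_ifs at hi with hxi
  · have hf := pos_of_mul_pos_right hi (hp i).le
    have hH := mul_levelFraction_le hp hf
    have hsub : ∑ k with x j ≤ x k, pbar k ≤ ∑ k with x i < x k, pbar k :=
      sum_le_sum_of_subset_of_nonneg (monotone_filter_right _ fun k _ hk => hij.trans_le hk)
        fun k _ _ => (hp k).le
    rw [if_pos (hxi.trans hij),
      levelFraction_eq_one hp (by nlinarith [sum_filter_eq_pos hp i (x := x)]), mul_one]
  · exact absurd hi (lt_irrefl 0)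

lemma isWaterfall_kappa (hp : ∀ i, 0 < pbar i) : IsWaterfall pbar x (kappa n pbar x ρ) where
  mem_Icc := kappa_mem_Icc hp
  eq_of_lt _ _ := kappa_eq_of_lt hp
  mul_eq_of_eq i j hij := by simp only [kappa_apply, hij]; split_ifs <;> ring

lemma sum_kappa_le (hp : ∀ i, 0 < pbar i) (hρ : 0 ≤ ρ) : ∑ i, kappa n pbar x ρ i ≤ ρ := by
  by_cases hS : (univ.filter fun i => 0 < kappa n pbar x ρ i).Nonempty
  · obtain ⟨i₀, hi₀, hmin⟩ := exists_min_image _ x hS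
    have hκi₀ : 0 < kappa n pbar x ρ i₀ := (mem_filter.1 hi₀).2
    set f := levelFraction pbar x ρ (x i₀)
    have hxi₀ : 0 < x i₀ := by
      by_contra h
      rw [kappa_apply, if_neg h] at hκi₀
      exact lt_irrefl 0 hκi₀
    have hf : 0 < f := by
      rw [kappa_apply, if_pos hxi₀] at hκi₀
      exact pos_of_mul_pos_right hκi₀ (hp i₀).le
    have hbound : ∀ k, kappa n pbar x ρ k ≤
        (if x i₀ < x k then pbar k else 0) + if x k = x i₀ then pbar k * f else 0 := by
      intro k
      rcases lt_trichotomy (x i₀) (x k) with h | h | h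
      · simp [h, h.ne', kappa_eq_of_lt hp hκi₀ h]
      · simp [← h, kappa_apply, hxi₀, f]
      · have : ¬ 0 < kappa n pbar x ρ k := fun hk => (hmin k (by simpa using hk)).not_gt h
        simp [h.ne, h.not_gt]
        linarith
    calc ∑ k, kappa n pbar x ρ k
        ≤ ∑ k with x i₀ < x k, pbar k + (∑ k with x k = x i₀, pbar k) * f := by
          simpa only [sum_filter, sum_mul, ite_mul, zero_mul, sum_add_distrib] using
            sum_le_sum fun k _ => hbound k
      _ ≤ ρ := by linarith [mul_levelFraction_le hp hf]
  · rw [Finset.not_nonempty_iff_eq_empty, filter_eq_empty_iff] at hS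
    rw [sum_eq_zero fun k _ => le_antisymm (not_lt.1 (hS (mem_univ k))) (kappa_mem_Icc hp k).1]
    exact hρ

end Kappa

section Energy

variable {ι : Type*} [Fintype ι] {p : ι → ℝ}

def deliverableEnergy (p x : ι → ℝ) (b : ℝ) : ℝ := ∑ i, p i * min (x i) b

noncomputable def deliverableSurplus (p x w : ι → ℝ) : ℝ :=
  ⨅ b : Set.Ici (0 : ℝ), (deliverableEnergy p x b - deliverableEnergy p w b)

lemma abs_deliverableEnergy_sub_le (hp : ∀ i, 0 ≤ p i) (x x' : ι → ℝ) (b : ℝ) :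
    |deliverableEnergy p x b - deliverableEnergy p x' b| ≤ ∑ i, p i * |x i - x' i| := by
  rw [deliverableEnergy, deliverableEnergy, ← sum_sub_distrib]
  refine (abs_sum_le_sum_abs _ _).trans (sum_le_sum fun i _ => ?_)
  rw [← mul_sub, abs_mul, abs_of_nonneg (hp i)]
  exact mul_le_mul_of_nonneg_left (abs_min_sub_min_le _ _ _) (hp i)

lemma bddBelow_range_deliverableEnergy_sub (hp : ∀ i, 0 ≤ p i) (x w : ι → ℝ) :
    BddBelow (Set.range fun b : Set.Ici (0 : ℝ) =>
      deliverableEnergy p x b - deliverableEnergy p w b) := by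
  refine ⟨-∑ i, p i * (|x i| + |w i|), ?_⟩
  rintro _ ⟨⟨b, hb⟩, rfl⟩
  have hx := abs_deliverableEnergy_sub_le hp x 0 b
  have hw := abs_deliverableEnergy_sub_le hp w 0 b
  have h0 : deliverableEnergy p 0 b = 0 := by
    simp [deliverableEnergy, min_eq_left (Set.mem_Ici.1 hb)]
  simp only [h0, sub_zero, Pi.zero_apply] at hx hw
  simp only [mul_add, sum_add_distrib]
  linarith [abs_le.1 hx, abs_le.1 hw]

lemma deliverableSurplus_le (hp : ∀ i, 0 ≤ p i) (x w : ι → ℝ) {b : ℝ} (hb : 0 ≤ b) :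
    deliverableSurplus p x w ≤ deliverableEnergy p x b - deliverableEnergy p w b :=
  ciInf_le (bddBelow_range_deliverableEnergy_sub hp x w) ⟨b, hb⟩

lemma le_deliverableSurplus {x w : ι → ℝ} {c : ℝ}
    (h : ∀ b, 0 ≤ b → c ≤ deliverableEnergy p x b - deliverableEnergy p w b) :
    c ≤ deliverableSurplus p x w :=
  le_ciInf fun b => h b b.2

lemma deliverableSurplus_self (x : ι → ℝ) : deliverableSurplus p x x = 0 := by
  simp [deliverableSurplus]

lemma deliverableSurplus_sub_le (hp : ∀ i, 0 ≤ p i) (x w x' w' : ι → ℝ) :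
    deliverableSurplus p x w - ∑ i, p i * (|x i - x' i| + |w i - w' i|) ≤
      deliverableSurplus p x' w' := by
  refine le_deliverableSurplus fun b hb => ?_
  have hx := abs_le.1 (abs_deliverableEnergy_sub_le hp x x' b)
  have hw := abs_le.1 (abs_deliverableEnergy_sub_le hp w w' b)
  have := deliverableSurplus_le hp x w hb
  simp only [mul_add, sum_add_distrib]
  linarith

lemma continuous_deliverableSurplus (hp : ∀ i, 0 ≤ p i) :
    Continuous fun q : (ι → ℝ) × (ι → ℝ) => deliverableSurplus p q.1 q.2 := by
  refine (LipschitzWith.of_dist_le' (K := 2 * ∑ i, p i) fun q q' => ?_).continuous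
  have hcoord : ∀ i, |q.1 i - q'.1 i| + |q.2 i - q'.2 i| ≤ 2 * dist q q' := fun i => by
    have hq : max (dist q.1 q'.1) (dist q.2 q'.2) = dist q q' := Prod.dist_eq.symm
    have h1 : dist (q.1 i) (q'.1 i) ≤ dist q q' :=
      (dist_le_pi_dist q.1 q'.1 i).trans ((le_max_left _ _).trans_eq hq)
    have h2 : dist (q.2 i) (q'.2 i) ≤ dist q q' :=
      (dist_le_pi_dist q.2 q'.2 i).trans ((le_max_right _ _).trans_eq hq)
    rw [Real.dist_eq] at h1 h2
    linarith
  have hsum : ∑ i, p i * (|q.1 i - q'.1 i| + |q.2 i - q'.2 i|) ≤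
      (2 * ∑ i, p i) * dist q q' := by
    rw [mul_comm 2, mul_assoc, sum_mul]
    exact sum_le_sum fun i _ => mul_le_mul_of_nonneg_left (hcoord i) (hp i)
  have h1 := deliverableSurplus_sub_le hp q.1 q.2 q'.1 q'.2
  have h2 := deliverableSurplus_sub_le hp q'.1 q'.2 q.1 q.2
  simp only [abs_sub_comm (q'.1 _), abs_sub_comm (q'.2 _)] at h2
  rw [Real.dist_eq, abs_le]
  constructor <;> linarith

lemma ContinuousOn.deliverableSurplus (hp : ∀ i, 0 ≤ p i) {x w : ℝ → ι → ℝ} {S : Set ℝ}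
    (hx : ContinuousOn x S) (hw : ContinuousOn w S) :
    ContinuousOn (fun s => deliverableSurplus p (x s) (w s)) S :=
  (continuous_deliverableSurplus hp).comp_continuousOn (f := fun s => (x s, w s)) (hx.prodMk hw)

variable {x v : ι → ℝ} {h : ℝ}

lemma deliverableEnergy_step (hp : ∀ i, 0 < p i) (hv : ∀ i, v i ∈ Set.Icc 0 (p i))
    (hh : 0 ≤ h) (b : ℝ) :
    deliverableEnergy p (fun i => x i + h * (-v i / p i)) b = deliverableEnergy p x b -
      ∑ i, max (h * v i - p i * (min (x i) (b + h) - min (x i) b)) 0 := by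
  rw [deliverableEnergy, deliverableEnergy, ← sum_sub_distrib]
  refine sum_congr rfl fun i _ => ?_
  have ha : h * v i / p i ≤ h := by
    rw [div_le_iff₀ (hp i)]
    exact mul_le_mul_of_nonneg_left (hv i).2 hh
  rw [show x i + h * (-v i / p i) = x i - h * v i / p i by ring,
    min_sub_eq_min_sub_max (div_nonneg (mul_nonneg hh (hv i).1) (hp i).le) ha, mul_sub,
    mul_max_of_nonneg _ _ (hp i).le, mul_sub, mul_div_cancel₀ _ (hp i).ne', mul_zero]

/-- Below a level `b`, the waterfall step loses at most `max (h * ρ - P) 0` of energy, where `P`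
is what it holds between `b` and `b + h`, while the other control loses at least `h * ρ - Q`;
the surplus at `b + h` absorbs the difference `Q - P`. -/
lemma deliverableSurplus_le_step {w u : ι → ℝ} {ρ : ℝ} (hp : ∀ i, 0 < p i)
    (hv : IsWaterfall p x v) (hvρ : ∑ i, v i ≤ ρ) (hu : ∀ i, u i ∈ Set.Icc 0 (p i))
    (huρ : ∑ i, u i = ρ) (hh : 0 < h) (hsep : ∀ i j, x i ≠ x j → h ≤ |x i - x j|) :
    deliverableSurplus p x w ≤ deliverableSurplus p (fun i => x i + h * (-v i / p i))
      (fun i => w i + h * (-u i / p i)) := by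
  have hp' : ∀ i, 0 ≤ p i := fun i => (hp i).le
  refine le_deliverableSurplus fun b hb => ?_
  rw [deliverableEnergy_step hp hv.mem_Icc hh.le, deliverableEnergy_step hp hu hh.le]
  have hband : ∀ y : ι → ℝ, ∑ i, p i * (min (y i) (b + h) - min (y i) b) =
      deliverableEnergy p y (b + h) - deliverableEnergy p y b := fun y => by
    simp only [deliverableEnergy, ← sum_sub_distrib, mul_sub]
  have hloss_x := hv.sum_loss_le hp hh hsep b
  have hloss_w : ∑ i, (h * u i - p i * (min (w i) (b + h) - min (w i) b)) ≤
      ∑ i, max (h * u i - p i * (min (w i) (b + h) - min (w i) b)) 0 :=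
    sum_le_sum fun i _ => le_max_left _ _
  have hloss_w₀ : 0 ≤ ∑ i, max (h * u i - p i * (min (w i) (b + h) - min (w i) b)) 0 :=
    sum_nonneg fun i _ => le_max_right _ _
  simp only [sum_sub_distrib, ← mul_sum, hband, huρ] at hloss_x hloss_w
  have hb := deliverableSurplus_le hp' x w hb
  have hbh := deliverableSurplus_le hp' x w (b := b + h) (by linarith)
  have hhv : h * ∑ i, v i ≤ h * ρ := mul_le_mul_of_nonneg_left hvρ hh.le
  rcases le_total (h * ∑ i, v i - (deliverableEnergy p x (b + h) - deliverableEnergy p x b)) 0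
    with hle | hle
  · rw [max_eq_right hle] at hloss_x
    linarith
  · rw [max_eq_left hle] at hloss_x
    linarith

end Energy

section Majorisation

open Filter Topology Asymptotics

variable {ι : Type*} [Fintype ι] {p : ι → ℝ}

lemma eventually_sub_le_deliverableSurplus (hp : ∀ i, 0 < p i) {x w : ℝ → ι → ℝ}
    {v u : ι → ℝ} {ρ s ε : ℝ} (hv : IsWaterfall p (x s) v) (hvρ : ∑ i, v i ≤ ρ)
    (hu : ∀ i, u i ∈ Set.Icc 0 (p i)) (huρ : ∑ i, u i = ρ)
    (hx : ∀ i, HasDerivAt (fun r => x r i) (-v i / p i) s)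
    (hw : ∀ i, HasDerivAt (fun r => w r i) (-u i / p i) s) (hε : 0 < ε) :
    ∀ᶠ z in 𝓝[>] s, deliverableSurplus p (x s) (w s) - ε * (z - s) ≤
      deliverableSurplus p (x z) (w z) := by
  have hp' : ∀ i, 0 ≤ p i := fun i => (hp i).le
  have herr : (fun z => ∑ i, p i * (|x z i - x s i - (z - s) • (-v i / p i)| +
      |w z i - w s i - (z - s) • (-u i / p i)|)) =o[𝓝 s] fun z => z - s :=
    IsLittleO.fun_sum fun i _ => ((hasDerivAt_iff_isLittleO.1 (hx i)).norm_left.add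
      (hasDerivAt_iff_isLittleO.1 (hw i)).norm_left).const_mul_left (p i)
  have hsep : ∀ᶠ z in 𝓝[>] s, ∀ i j, x s i ≠ x s j → z - s ≤ |x s i - x s j| := by
    simp only [eventually_all]
    intro i j hij
    filter_upwards [Ioo_mem_nhdsGT (lt_add_of_pos_right s (abs_pos.2 (sub_ne_zero.2 hij)))]
      with z hz
    linarith [hz.2]
  filter_upwards [self_mem_nhdsWithin, nhdsWithin_le_nhds (herr.def hε), hsep]
    with z (hz : s < z) hzerr hzsep
  have hstep := deliverableSurplus_le_step (w := w s) hp hv hvρ hu huρ (sub_pos.2 hz) hzsep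
  have hpert := deliverableSurplus_sub_le hp' (fun i => x s i + (z - s) * (-v i / p i))
    (fun i => w s i + (z - s) * (-u i / p i)) (x z) (w z)
  simp only [Real.norm_eq_abs, smul_eq_mul, abs_of_pos (sub_pos.2 hz), sub_sub] at hzerr
  simp only [abs_sub_comm _ (x z _), abs_sub_comm _ (w z _)] at hpert
  linarith [le_abs_self (∑ i, p i * (|x z i - (x s i + (z - s) * (-v i / p i))| +
    |w z i - (w s i + (z - s) * (-u i / p i))|))]

theorem deliverableEnergy_le_of_isWaterfall (hp : ∀ i, 0 < p i) {x w v u : ℝ → ι → ℝ}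
    {ρ : ℝ → ℝ} {T : ℝ} (hT : 0 ≤ T) (h0 : x 0 = w 0)
    (hv : ∀ s ∈ Set.Icc 0 T, IsWaterfall p (x s) (v s))
    (hvρ : ∀ s ∈ Set.Icc 0 T, ∑ i, v s i ≤ ρ s)
    (hx : ∀ s ∈ Set.Icc 0 T, ∀ i, HasDerivAt (fun r => x r i) (-(v s i) / p i) s)
    (hu : ∀ s ∈ Set.Icc 0 T, ∀ i, u s i ∈ Set.Icc 0 (p i))
    (huρ : ∀ s ∈ Set.Icc 0 T, ∑ i, u s i = ρ s)
    (hw : ∀ s ∈ Set.Icc 0 T, ∀ i, HasDerivAt (fun r => w r i) (-(u s i) / p i) s)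
    {b : ℝ} (hb : 0 ≤ b) :
    deliverableEnergy p (w T) b ≤ deliverableEnergy p (x T) b := by
  have hp' : ∀ i, 0 ≤ p i := fun i => (hp i).le
  set ψ := fun s => deliverableSurplus p (x s) (w s)
  have hcont : ContinuousOn ψ (Set.Icc 0 T) := by
    have hxc : ContinuousOn x (Set.Icc 0 T) :=
      continuousOn_pi.2 fun i s hs => (hx s hs i).continuousAt.continuousWithinAt
    have hwc : ContinuousOn w (Set.Icc 0 T) :=
      continuousOn_pi.2 fun i s hs => (hw s hs i).continuousAt.continuousWithinAt
    exact hxc.deliverableSurplus hp' hwc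
  have hslope : ∀ s ∈ Set.Ico 0 T, ∀ r, 0 < r → ∃ᶠ z in 𝓝[>] s, slope (-ψ) s z < r := by
    intro s hs r hr
    have hs' : s ∈ Set.Icc 0 T := Set.Ico_subset_Icc_self hs
    refine Eventually.frequently ?_
    filter_upwards [self_mem_nhdsWithin, eventually_sub_le_deliverableSurplus hp (hv s hs')
      (hvρ s hs') (hu s hs') (huρ s hs') (hx s hs') (hw s hs') (half_pos hr)]
      with z (hz : s < z) hψz
    rw [slope_def_field, div_lt_iff₀ (sub_pos.2 hz)]
    simp only [Pi.neg_apply]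
    nlinarith
  have hψT : -ψ T ≤ 0 :=
    image_le_of_liminf_slope_right_le_deriv_boundary (B := fun _ => 0) (B' := fun _ => 0)
      hcont.neg (by simp [ψ, h0, deliverableSurplus_self]) continuousOn_const
      (fun _ _ => hasDerivWithinAt_const _ _ _) hslope ⟨hT, le_rfl⟩
  linarith [deliverableSurplus_le hp' (x T) (w T) hb]

end Majorisation

section Coupling

variable {ι : Type*} [Fintype ι] {p x y : ι → ℝ}

def couplings (p : ι → ℝ) : Set (ι → ι → ℝ) :=
  {N | (∀ i j, 0 ≤ N i j) ∧ (∀ i, ∑ j, N i j = p i) ∧ (∀ j, ∑ i, N i j = p j)}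

lemma isCompact_couplings : IsCompact (couplings p) := by
  have hclosed : IsClosed (couplings p) := by
    have h : couplings p = (⋂ i, ⋂ j, {N : ι → ι → ℝ | 0 ≤ N i j}) ∩
        ((⋂ i, {N | ∑ j, N i j = p i}) ∩ ⋂ j, {N | ∑ i, N i j = p j}) := by
      ext N; simp [couplings]
    rw [h]
    refine (isClosed_iInter fun i => isClosed_iInter fun j => ?_).inter
      ((isClosed_iInter fun i => ?_).inter (isClosed_iInter fun j => ?_))
    · exact isClosed_le continuous_const (by fun_prop)
    · exact isClosed_eq (by fun_prop) continuous_const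
    · exact isClosed_eq (by fun_prop) continuous_const
  have hbox := isCompact_univ_pi fun _ : ι =>
    isCompact_univ_pi fun j => isCompact_Icc (a := (0 : ℝ)) (b := p j)
  refine hbox.of_isClosed_subset hclosed fun N hN i _ j _ => ⟨hN.1 i j, ?_⟩
  rw [← hN.2.2 j]
  exact single_le_sum (fun k _ => hN.1 k j) (mem_univ i)

lemma couplings_nonempty (hp : ∀ i, 0 < p i) : (couplings p).Nonempty := by
  have hS : ∀ i, 0 < ∑ k, p k := fun i => sum_pos (fun k _ => hp k) ⟨i, mem_univ i⟩
  refine ⟨fun i j => p i * p j / ∑ k, p k,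
    fun i j => div_nonneg (mul_nonneg (hp i).le (hp j).le) (hS i).le, fun i => ?_, fun j => ?_⟩
  · rw [← sum_div, ← mul_sum, mul_div_assoc, div_self (hS i).ne', mul_one]
  · rw [← sum_div, ← sum_mul, mul_div_right_comm, div_self (hS j).ne', one_mul]

/-- Moves mass `δ` from the cells `(i, A)` and `(k, B)` to `(i, B)` and `(k, A)`. -/
def exchange [DecidableEq ι] (N : ι → ι → ℝ) (δ : ℝ) (i k A B : ι) : ι → ι → ℝ :=
  fun i' j' => N i' j' + δ * ((if i' = i then 1 else 0) - if i' = k then 1 else 0) *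
    ((if j' = B then 1 else 0) - if j' = A then 1 else 0)

lemma exchange_mem_couplings [DecidableEq ι] {N : ι → ι → ℝ} {δ : ℝ} {i k A B : ι}
    (hN : N ∈ couplings p) (hδ : 0 ≤ δ) (hiA : δ ≤ N i A) (hkB : δ ≤ N k B) :
    exchange N δ i k A B ∈ couplings p := by
  refine ⟨fun i' j' => ?_, fun i' => ?_, fun j' => ?_⟩
  · have := hN.1 i' j'
    simp only [exchange]
    split_ifs <;> subst_vars <;> linarith
  · simp [exchange, sum_add_distrib, mul_sub, sum_sub_distrib, hN.2.1 i']
  · simp [exchange, sum_add_distrib, mul_sub, sum_sub_distrib, hN.2.2 j']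

lemma sum_exchange_mul [DecidableEq ι] (N : ι → ι → ℝ) (δ : ℝ) (i k A B j : ι) :
    ∑ i', exchange N δ i k A B i' j * x i' = ∑ i', N i' j * x i' +
      δ * (x i - x k) * ((if j = B then 1 else 0) - if j = A then 1 else 0) := by
  simp [exchange, add_mul, sum_add_distrib, mul_sub, sub_mul, sum_sub_distrib]

def overloadPenalty (p x y : ι → ℝ) (N : ι → ι → ℝ) : ℝ :=
  ∑ j, max (∑ i, N i j * x i - p j * y j) 0 ^ 2

lemma le_of_isMinOn_overloadPenalty {N : ι → ι → ℝ} {i k A B : ι} (hN : N ∈ couplings p)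
    (hmin : IsMinOn (overloadPenalty p x y) (couplings p) N)
    (hA : p A * y A < ∑ i', N i' A * x i') (hB : ∑ i', N i' B * x i' ≤ p B * y B)
    (hiA : 0 < N i A) (hkB : 0 < N k B) : x i ≤ x k := by
  classical
  by_contra hki
  have hd : 0 < x i - x k := by linarith
  set v := ∑ i', N i' A * x i' - p A * y A
  have hv : 0 < v := by linarith
  have hAB : A ≠ B := by rintro rfl; linarith
  set δ := min (min (N i A) (N k B)) (v / (2 * (x i - x k)))
  have hδ : 0 < δ := lt_min (lt_min hiA hkB) (by positivity)
  set s := δ * (x i - x k)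
  have hs : 0 < s := mul_pos hδ hd
  have hsv : s ≤ v / 2 := by
    have := min_le_right (min (N i A) (N k B)) (v / (2 * (x i - x k)))
    rw [le_div_iff₀ (by positivity)] at this
    linarith
  have hmem := exchange_mem_couplings hN hδ.le ((min_le_left _ _).trans (min_le_left _ _))
    ((min_le_left _ _).trans (min_le_right _ _))
  have hcol : ∀ j, max (∑ i', exchange N δ i k A B i' j * x i' - p j * y j) 0 ^ 2 ≤
      max (∑ i', N i' j * x i' - p j * y j) 0 ^ 2 +
        ((if j = A then (v - s) ^ 2 - v ^ 2 else 0) + if j = B then s ^ 2 else 0) := by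
    intro j
    rw [sum_exchange_mul]
    by_cases hjA : j = A
    · simp only [hjA, hAB, if_true, if_false, zero_sub, mul_neg, mul_one, add_zero]
      rw [max_eq_left (by linarith), max_eq_left hv.le]
      linarith
    · by_cases hjB : j = B
      · simp only [hjB, hAB.symm, if_true, if_false, sub_zero, mul_one, zero_add]
        have h1 : max (∑ i', N i' B * x i' + s - p B * y B) 0 ≤ s :=
          max_le (by linarith) hs.le
        have h2 := pow_le_pow_left₀ (le_max_right _ _) h1 2
        nlinarith [sq_nonneg (max (∑ i', N i' B * x i' - p B * y B) 0)]
      · simp [hjA, hjB]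
  have hlt : overloadPenalty p x y (exchange N δ i k A B) < overloadPenalty p x y N := by
    calc overloadPenalty p x y (exchange N δ i k A B)
        ≤ ∑ j, (max (∑ i', N i' j * x i' - p j * y j) 0 ^ 2 +
            ((if j = A then (v - s) ^ 2 - v ^ 2 else 0) + if j = B then s ^ 2 else 0)) :=
          sum_le_sum fun j _ => hcol j
      _ = overloadPenalty p x y N + (((v - s) ^ 2 - v ^ 2) + s ^ 2) := by
          simp [overloadPenalty, sum_add_distrib]
      _ < overloadPenalty p x y N := by nlinarith
  exact (isMinOn_iff.1 hmin _ hmem).not_gt hlt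

lemma exists_deliverableEnergy_lt (hp : ∀ i, 0 < p i) (hx : ∀ i, 0 ≤ x i)
    {N : ι → ι → ℝ} (hN : N ∈ couplings p)
    (hord : ∀ i k A B, p A * y A < ∑ i', N i' A * x i' → ∑ i', N i' B * x i' ≤ p B * y B →
      0 < N i A → 0 < N k B → x i ≤ x k)
    {A : ι} (hA : p A * y A < ∑ i, N i A * x i) :
    ∃ b, 0 ≤ b ∧ deliverableEnergy p y b < deliverableEnergy p x b := by
  classical
  set V := univ.filter fun j => p j * y j < ∑ i, N i j * x i
  set S := (Finset.univ ×ˢ V).filter fun q => 0 < N q.1 q.2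
  have hS : S.Nonempty := by
    obtain ⟨i, -, hi⟩ := exists_lt_of_sum_lt (s := univ) (f := fun _ => (0 : ℝ))
      (g := fun i => N i A) (by simpa [hN.2.2 A] using hp A)
    exact ⟨(i, A), by simp [S, V, hA, hi]⟩
  -- Test the domination at the largest time-to-go `x i₀` feeding an overloaded column: overloaded
  -- columns are fed only from below this level and, by `hord`, the others only from above.
  obtain ⟨⟨i₀, A₀⟩, hq, hmax⟩ := exists_max_image S (fun q => x q.1) hS
  simp only [S, V, Finset.mem_filter, Finset.mem_product, Finset.mem_univ, true_and,
    Prod.forall] at hq hmax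
  refine ⟨x i₀, hx i₀, ?_⟩
  have hover : ∀ j, p j * y j < ∑ i, N i j * x i →
      ∑ i, N i j * min (x i) (x i₀) = ∑ i, N i j * x i := fun j hj =>
    sum_congr rfl fun i _ => by
      rcases (hN.1 i j).lt_or_eq with hij | hij
      · rw [min_eq_left (hmax i j ⟨hj, hij⟩)]
      · simp [← hij]
  have hunder : ∀ j, ¬ p j * y j < ∑ i, N i j * x i →
      ∑ i, N i j * min (x i) (x i₀) = p j * x i₀ := fun j hj => by
    rw [← hN.2.2 j, sum_mul]
    refine sum_congr rfl fun i _ => ?_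
    rcases (hN.1 i j).lt_or_eq with hij | hij
    · rw [min_eq_right (hord i₀ i A₀ j hq.1 (not_lt.1 hj) hq.2 hij)]
    · simp [← hij]
  have hcol : ∀ j, p j * min (y j) (x i₀) ≤ ∑ i, N i j * min (x i) (x i₀) := fun j => by
    by_cases hj : p j * y j < ∑ i, N i j * x i
    · rw [hover j hj]
      exact (mul_le_mul_of_nonneg_left (min_le_left _ _) (hp j).le).trans hj.le
    · rw [hunder j hj]
      exact mul_le_mul_of_nonneg_left (min_le_right _ _) (hp j).le
  calc deliverableEnergy p y (x i₀) < ∑ j, ∑ i, N i j * min (x i) (x i₀) := by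
        refine sum_lt_sum (fun j _ => hcol j) ⟨A₀, mem_univ _, ?_⟩
        rw [hover A₀ hq.1]
        exact (mul_le_mul_of_nonneg_left (min_le_left _ _) (hp A₀).le).trans_lt hq.1
    _ = deliverableEnergy p x (x i₀) := by
        rw [sum_comm]
        exact sum_congr rfl fun i _ => by rw [← sum_mul, hN.2.1 i]

theorem exists_coupling_of_deliverableEnergy_le (hp : ∀ i, 0 < p i) (hx : ∀ i, 0 ≤ x i)
    (hxy : ∀ b, 0 ≤ b → deliverableEnergy p x b ≤ deliverableEnergy p y b) :
    ∃ N ∈ couplings p, ∀ j, ∑ i, N i j * x i ≤ p j * y j := by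
  have hcont : Continuous (overloadPenalty p x y) := by unfold overloadPenalty; fun_prop
  obtain ⟨N, hN, hmin⟩ := isCompact_couplings.exists_isMinOn
    (couplings_nonempty hp) hcont.continuousOn
  refine ⟨N, hN, fun A => not_lt.1 fun hA => ?_⟩
  obtain ⟨b, hb, hlt⟩ := exists_deliverableEnergy_lt hp hx hN
    (fun i k A B hA hB hiA hkB => le_of_isMinOn_overloadPenalty hN hmin hA hB hiA hkB) hA
  exact (hxy b hb).not_gt hlt

end Coupling

section Feasibility

variable {n : ℕ} {pbar x y : Fin n → ℝ}

theorem Feasible.of_coupling (hp : ∀ i, 0 < pbar i) {N : Fin n → Fin n → ℝ}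
    (hN : N ∈ couplings pbar) (hE : ∀ j, ∑ i, N i j * x i ≤ pbar j * y j) {R : ℝ → ℝ}
    (h : Feasible n pbar x R) : Feasible n pbar y R := by
  obtain ⟨u, z, hz0, hu, husum, hz, hznn⟩ := h
  refine ⟨fun t j => ∑ i, N i j * (u t i / pbar i),
    fun t j => y j - ∑ i, N i j / pbar j * (x i - z t i),
    fun j => by simp [hz0], fun t ht j => ⟨?_, ?_⟩, fun t ht => ?_, fun t ht j => ?_,
    fun t ht j => ?_⟩
  · exact sum_nonneg fun i _ => mul_nonneg (hN.1 i j) (div_nonneg (hu t ht i).1 (hp i).le)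
  · calc ∑ i, N i j * (u t i / pbar i) ≤ ∑ i, N i j :=
          sum_le_sum fun i _ => mul_le_of_le_one_right (hN.1 i j)
            ((div_le_one (hp i)).2 (hu t ht i).2)
      _ = pbar j := hN.2.2 j
  · rw [sum_comm, ← husum t ht]
    refine sum_congr rfl fun i _ => ?_
    rw [← sum_mul, hN.2.1 i, mul_div_cancel₀ _ (hp i).ne']
  · refine ((HasDerivAt.fun_sum fun i _ =>
      ((hz t ht i).const_sub (x i)).const_mul (N i j / pbar j)).const_sub (y j)).congr_deriv ?_
    rw [neg_div, sum_div]
    exact congrArg _ (sum_congr rfl fun i _ => by ring)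
  · have hle : ∑ i, N i j / pbar j * (x i - z t i) ≤ (∑ i, N i j * x i) / pbar j := by
      rw [sum_div]
      exact sum_le_sum fun i _ => by
        rw [div_mul_eq_mul_div]
        exact div_le_div_of_nonneg_right (mul_le_mul_of_nonneg_left
          (sub_le_self _ (hznn t ht i)) (hN.1 i j)) (hp j).le
    have := (div_le_iff₀' (hp j)).2 (hE j)
    simp only
    linarith

end Feasibility

lemma timeToFailure_mono {n : ℕ} {pbar x y : Fin n → ℝ}
    (h : ∀ R, Feasible n pbar x R → Feasible n pbar y R) (R : ℝ → ℝ) :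
    timeToFailure n pbar x R ≤ timeToFailure n pbar y R :=
  biSup_mono fun _ ht => ⟨ht.1, h _ ht.2⟩

theorem closedLoop_maximises_timeToFailure_general (n : ℕ) (pbar : Fin n → ℝ) (Pr : ℝ → ℝ)
    (T : ℝ) (hT : 0 ≤ T) (zt zs : ℝ → Fin n → ℝ) (hp : ∀ i, 0 < pbar i)
    (hf : FulfilsOn n pbar Pr zt T)
    (h0 : zs 0 = zt 0) (hcl : ClosedLoopOn n pbar Pr zs T) :
    ∀ Pr' : ℝ → ℝ,
      timeToFailure n pbar (zt T) Pr' ≤ timeToFailure n pbar (zs T) Pr' := by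
  obtain ⟨u, hu, husum, hzt, hztnn⟩ := hf
  have hPr : ∀ s ∈ Set.Icc 0 T, 0 ≤ Pr s := fun s hs =>
    husum s hs ▸ sum_nonneg fun i _ => (hu s hs i).1
  have hmaj : ∀ b, 0 ≤ b → deliverableEnergy pbar (zt T) b ≤ deliverableEnergy pbar (zs T) b :=
    fun b hb => deliverableEnergy_le_of_isWaterfall hp hT h0
      (fun _ _ => isWaterfall_kappa hp) (fun s hs => sum_kappa_le hp (hPr s hs)) hcl hu husum hzt
      hb
  obtain ⟨N, hN, hNE⟩ := exists_coupling_of_deliverableEnergy_le hp (hztnn T ⟨hT, le_rfl⟩) hmaj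
  exact timeToFailure_mono fun R => Feasible.of_coupling hp hN hNE

/-- the policy maximises time to failure: after applying a feasible
reference on `[0, T]`, the time to failure from the policy's state dominates that from
the state of any other fulfilling solution, for every future reference signal. -/
theorem closedLoop_maximises_timeToFailure (n : ℕ) (pbar : Fin n → ℝ) (Pr : ℝ → ℝ)
    (T : ℝ) (hT : 0 ≤ T) (zt zs : ℝ → Fin n → ℝ) (hp : ∀ i, 0 < pbar i)
    (hf : FulfilsOn n pbar Pr zt T)
    (h0 : zs 0 = zt 0) (hcl : ClosedLoopOn n pbar Pr zs T)
    (hnn : ∀ s ∈ Set.Icc 0 T, ∀ i, 0 ≤ zs s i) :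
    ∀ Pr' : ℝ → ℝ,
      timeToFailure n pbar (zt T) Pr' ≤ timeToFailure n pbar (zs T) Pr' :=
  closedLoop_maximises_timeToFailure_general n pbar Pr T hT zt zs hp hf h0 hcl
end
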